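/- arXiv:2405.08964 — 9 statements merged into one kernel-verified Lean document; each statement's English description precedes it below -/
import Mathlib

section
/- Let k be a field of characteristic zero and let I be an ideal of k[x_1,...,x_n] contained in the maximal ideal m = (x_1,...,x_n). For a polynomial P, define f • P as the result of applying the constant-coefficient differential operator f(∂/∂x_1,...,∂/∂x_n) to P. Then the set {P ∈ k[x] : ∀ f ∈ I, P • f ∈ m} is equal to the set {P ∈ k[x] : ∀ f ∈ I, f • P = 0}. -/
/-!
Under the apolar pairing `⟨f, P⟩ = ∑_d f_d P_d d!`, which is symmetric, the constant term of
`f • P` is `⟨f, P⟩`; so `P • f ∈ m` says `⟨f, P⟩ = 0`. More generally the coefficient of `x^u`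
in `f • P` is `⟨x^u f, P⟩ / u!`, so `f • P = 0` exactly when `P` is orthogonal to every
`x^u f`, and these all lie in `I` when `f` does.
-/

open MvPolynomial

noncomputable section

open Classical in
/-- Apply the constant-coefficient differential operator `f(∂)` to `P`. -/
def diffApply {k σ : Type*} [CommSemiring k] (f P : MvPolynomial σ k) :
    MvPolynomial σ k :=
  ∑ d ∈ f.support, ∑ e ∈ P.support,
    if d ≤ e then
      monomial (e - d)
        (f.coeff d * P.coeff e * ∏ i ∈ d.support, ((e i).descFactorial (d i) : k))
    else 0

namespace Finsupp

variable {σ : Type*}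

def factorial (d : σ →₀ ℕ) : ℕ := d.prod fun _ n => n.factorial

/-- The factor `∏ i, (e i)(e i - 1)⋯(e i - d i + 1)` picked up when `∂^d` lowers `x^e` to
`x^(e - d)`. -/
def descFactorial (e d : σ →₀ ℕ) : ℕ := d.prod fun i n => (e i).descFactorial n

theorem factorial_pos (d : σ →₀ ℕ) : 0 < d.factorial :=
  Finset.prod_pos fun i _ => Nat.factorial_pos (d i)

theorem descFactorial_self (d : σ →₀ ℕ) : d.descFactorial d = d.factorial :=
  Finset.prod_congr rfl fun i _ => Nat.descFactorial_self (d i)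

theorem factorial_mul_descFactorial {d e : σ →₀ ℕ} (h : d ≤ e) :
    (e - d).factorial * e.descFactorial d = e.factorial := by
  classical
  rw [factorial, descFactorial, factorial,
    prod_of_support_subset _ (support_mono tsub_le_self) _ (fun _ _ => rfl),
    prod_of_support_subset _ (support_mono h) _ (fun i _ => Nat.descFactorial_zero _),
    ← Finset.prod_mul_distrib]
  exact Finset.prod_congr rfl fun i _ => Nat.factorial_mul_descFactorial (h i)

end Finsupp

namespace MvPolynomial

variable {k σ : Type*} [CommSemiring k]

theorem mem_span_range_X_iff_coeff_zero {g : MvPolynomial σ k} :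
    g ∈ Ideal.span (Set.range (X : σ → MvPolynomial σ k)) ↔ coeff 0 g = 0 := by
  rw [← pow_one (Ideal.span _), mem_pow_idealOfVars_iff']
  simp [Finsupp.degree_eq_zero_iff]

theorem coeff_ite_le_monomial_tsub [DecidableEq σ] (d e u : σ →₀ ℕ) (c : k) :
    coeff u (if d ≤ e then monomial (e - d) c else 0) = if e = d + u then c else 0 := by
  by_cases hde : d ≤ e
  · rw [if_pos hde, coeff_monomial]
    exact if_congr (by rw [tsub_eq_iff_eq_add_of_le hde, add_comm]) rfl rfl
  · rw [if_neg hde, coeff_zero, if_neg (by rintro rfl; exact hde le_self_add)]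

theorem coeff_diffApply (f P : MvPolynomial σ k) (u : σ →₀ ℕ) :
    coeff u (diffApply f P) =
      ∑ d ∈ f.support, f.coeff d * P.coeff (d + u) * ((d + u).descFactorial d : k) := by
  classical
  rw [diffApply, coeff_sum]
  refine Finset.sum_congr rfl fun d _ => ?_
  simp_rw [coeff_sum, coeff_ite_le_monomial_tsub, Finset.sum_ite_eq', mem_support_iff]
  split_ifs with hP
  · simp [Finsupp.descFactorial, Finsupp.prod]
  · rw [not_not.mp hP, mul_zero, zero_mul]

theorem coeff_zero_diffApply_eq_sum {f : MvPolynomial σ k} (P : MvPolynomial σ k)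
    {S : Finset (σ →₀ ℕ)} (hS : f.support ⊆ S) :
    coeff 0 (diffApply f P) = ∑ d ∈ S, f.coeff d * P.coeff d * (d.factorial : k) := by
  classical
  rw [coeff_diffApply]
  refine Finset.sum_subset_zero_on_sdiff hS (fun d hd => ?_) (fun d _ => ?_)
  · rw [notMem_support_iff.mp (Finset.mem_sdiff.mp hd).2, zero_mul, zero_mul]
  · rw [add_zero, Finsupp.descFactorial_self]

theorem support_monomial_one_mul (u : σ →₀ ℕ) (f : MvPolynomial σ k) :
    (monomial u 1 * f).support = f.support.map (addLeftEmbedding u) :=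
  AddMonoidAlgebra.support_coeff_single_mul f 1 (by simp) u

theorem coeff_zero_diffApply_comm (f P : MvPolynomial σ k) :
    coeff 0 (diffApply f P) = coeff 0 (diffApply P f) := by
  classical
  rw [coeff_zero_diffApply_eq_sum P Finset.subset_union_left,
    coeff_zero_diffApply_eq_sum f Finset.subset_union_right]
  exact Finset.sum_congr rfl fun d _ => by ring

theorem coeff_zero_diffApply_monomial_mul (f P : MvPolynomial σ k) (u : σ →₀ ℕ) :
    coeff 0 (diffApply (monomial u 1 * f) P) = u.factorial * coeff u (diffApply f P) := by
  rw [coeff_zero_diffApply_eq_sum P le_rfl, support_monomial_one_mul, Finset.sum_map,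
    coeff_diffApply, Finset.mul_sum]
  refine Finset.sum_congr rfl fun d _ => ?_
  have hfact := Finsupp.factorial_mul_descFactorial (le_self_add : d ≤ d + u)
  rw [add_tsub_cancel_left] at hfact
  rw [addLeftEmbedding_apply, coeff_monomial_mul, one_mul, add_comm u d, ← hfact, Nat.cast_mul]
  ring

theorem diffApply_eq_zero_iff [NoZeroDivisors k] [CharZero k] {f P : MvPolynomial σ k} :
    diffApply f P = 0 ↔ ∀ u, coeff 0 (diffApply (monomial u 1 * f) P) = 0 := by
  refine MvPolynomial.ext_iff.trans (forall_congr' fun u => ?_)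
  rw [coeff_zero_diffApply_monomial_mul, coeff_zero, mul_eq_zero, Nat.cast_eq_zero,
    or_iff_right (Finsupp.factorial_pos u).ne']

end MvPolynomial

theorem stmt0_general {k : Type*} [Field k] [CharZero k] (n : ℕ)
    (I : Ideal (MvPolynomial (Fin n) k)) :
    { P : MvPolynomial (Fin n) k |
        ∀ f ∈ I, diffApply P f ∈ Ideal.span (Set.range (X : Fin n → MvPolynomial (Fin n) k)) }
      = { P : MvPolynomial (Fin n) k | ∀ f ∈ I, diffApply f P = 0 } := by
  ext P
  simp only [Set.mem_ofPred_eq, mem_span_range_X_iff_coeff_zero]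
  refine ⟨fun h f hf => ?_, fun h f hf => ?_⟩
  · exact diffApply_eq_zero_iff.mpr fun u =>
      (coeff_zero_diffApply_comm _ _).trans (h _ (I.mul_mem_left _ hf))
  · rw [← coeff_zero_diffApply_comm, h f hf, coeff_zero]

/-- for an ideal `I` contained in the maximal ideal `m = (x_1, …, x_n)`,
the set `{P : ∀ f ∈ I, P • f ∈ m}` equals the set `{P : ∀ f ∈ I, f • P = 0}`. -/
theorem stmt0 {k : Type*} [Field k] [CharZero k] (n : ℕ)
    (I : Ideal (MvPolynomial (Fin n) k))
    (hI : I ≤ Ideal.span (Set.range (X : Fin n → MvPolynomial (Fin n) k))) :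
    { P : MvPolynomial (Fin n) k |
        ∀ f ∈ I, diffApply P f ∈ Ideal.span (Set.range (X : Fin n → MvPolynomial (Fin n) k)) }
      = { P : MvPolynomial (Fin n) k | ∀ f ∈ I, diffApply f P = 0 } :=
  stmt0_general n I
end
end

section
/- Let R = k[x^(j) : j ≥ 0] be the polynomial ring in the formal derivatives of a single differential variable x over a field k of characteristic zero, with derivation d defined by d(x^(j)) = x^(j+1). Then the polynomial W = x·x'' − (x')² satisfies: for every generator g of the arc ideal of x² (i.e., every coefficient g_ℓ = Σ_{s=0}^{ℓ} x^(s)·x^(ℓ−s) of x(t)² where x(t) = Σ_j x^(j) t^j), the operator application g_ℓ • W = 0, where g_ℓ • W means applying g_ℓ(∂/∂x, ∂/∂x', ...) to W. -/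
open MvPolynomial

noncomputable section

/-- The arc ideal of the double point `x² = 0` in a single differential variable:
generated by `g_ℓ = ∑_{s=0}^ℓ x^(s) x^(ℓ-s)`, where `X j` stands for `x^(j)`. -/
def arcIdeal1 (k : Type*) [CommSemiring k] : Ideal (MvPolynomial ℕ k) :=
  Ideal.span { g | ∃ l : ℕ, g = ∑ s ∈ Finset.range (l + 1), X s * X (l - s) }

lemma single_pair_le_a {s t : ℕ}
    (h : (Finsupp.single s 1 + Finsupp.single t 1 : ℕ →₀ ℕ) ≤
      Finsupp.single 0 1 + Finsupp.single 2 1) :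
    (s = 0 ∧ t = 2) ∨ (s = 2 ∧ t = 0) := by
  rw [Finsupp.le_def] at h
  have hs := h s; have ht := h t
  simp only [Finsupp.add_apply, Finsupp.single_apply, if_pos rfl] at hs ht
  have hs' : s = 0 ∨ s = 2 := by
    by_contra hc
    push_neg at hc
    rw [if_neg (Ne.symm hc.1), if_neg (Ne.symm hc.2)] at hs
    split_ifs at hs <;> omega
  have ht' : t = 0 ∨ t = 2 := by
    by_contra hc
    push_neg at hc
    rw [if_neg (Ne.symm hc.1), if_neg (Ne.symm hc.2)] at ht
    split_ifs at ht <;> omega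
  rcases hs' with rfl | rfl <;> rcases ht' with h' | h' <;> subst h'
  · have h0 := h 0
    simp [Finsupp.single_apply] at h0
  · exact Or.inl ⟨rfl, rfl⟩
  · exact Or.inr ⟨rfl, rfl⟩
  · have h2 := h 2
    simp [Finsupp.single_apply] at h2
lemma single_pair_le_b {s t : ℕ}
    (h : (Finsupp.single s 1 + Finsupp.single t 1 : ℕ →₀ ℕ) ≤ Finsupp.single 1 2) :
    s = 1 ∧ t = 1 := by
  rw [Finsupp.le_def] at h
  have hs := h s; have ht := h t
  simp only [Finsupp.add_apply, Finsupp.single_apply, if_pos rfl] at hs ht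
  constructor
  · by_contra hc
    rw [if_neg (Ne.symm hc)] at hs
    split_ifs at hs <;> omega
  · by_contra hc
    rw [if_neg (Ne.symm hc)] at ht
    split_ifs at ht <;> omega

/-- the Wronskian `W = x x'' - (x')²` is annihilated by every generator
`g_ℓ = ∑_{s=0}^ℓ x^(s) x^(ℓ-s)` of the arc ideal of the double point `x² = 0`. -/
theorem stmt2 {k : Type*} [Field k] [CharZero k] (l : ℕ) :
    diffApply (∑ s ∈ Finset.range (l + 1), (X s * X (l - s) : MvPolynomial ℕ k))
      (X 0 * X 2 - X 1 ^ 2) = 0 := by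
  classical
  set a : ℕ →₀ ℕ := Finsupp.single 0 1 + Finsupp.single 2 1 with ha
  set b : ℕ →₀ ℕ := Finsupp.single 1 2 with hb
  set f : MvPolynomial ℕ k := ∑ s ∈ Finset.range (l + 1), X s * X (l - s) with hf
  set W : MvPolynomial ℕ k := X 0 * X 2 - X 1 ^ 2 with hWdef
  have hab : a ≠ b := by
    intro h
    have := DFunLike.congr_fun h 0
    simp [ha, hb, Finsupp.single_apply] at this
  have hXX : ∀ s t : ℕ, (X s * X t : MvPolynomial ℕ k)
      = monomial (Finsupp.single s 1 + Finsupp.single t 1) 1 := by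
    intro s t
    rw [show (X s : MvPolynomial ℕ k) = monomial (Finsupp.single s 1) 1 from rfl,
      show (X t : MvPolynomial ℕ k) = monomial (Finsupp.single t 1) 1 from rfl,
      monomial_mul, one_mul]
  have hW : W = monomial a 1 - monomial b 1 := by
    rw [hWdef, hXX, X_pow_eq_monomial, ha, hb]
  have hWa : coeff a W = 1 := by
    rw [hW]
    simp [coeff_monomial, Ne.symm hab, hab]
  have hWb : coeff b W = -1 := by
    rw [hW]
    simp [coeff_monomial, Ne.symm hab, hab]
  have hWsupp : W.support ⊆ {a, b} := by
    intro d hd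
    rw [mem_support_iff] at hd
    by_contra hc
    simp only [Finset.mem_insert, Finset.mem_singleton, not_or] at hc
    apply hd
    rw [hW]
    simp [coeff_monomial, Ne.symm hc.1, Ne.symm hc.2, sub_eq_zero]
  have hfc : ∀ d : ℕ →₀ ℕ, coeff d f =
      ∑ s ∈ Finset.range (l + 1),
        if Finsupp.single s 1 + Finsupp.single (l - s) 1 = d then (1 : k) else 0 := by
    intro d
    rw [hf, coeff_sum]
    refine Finset.sum_congr rfl fun s _ => ?_
    rw [hXX, coeff_monomial]
  have hfsupp : ∀ d ∈ f.support, ∃ s, s ≤ l ∧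
      d = Finsupp.single s 1 + Finsupp.single (l - s) 1 := by
    intro d hd
    rw [mem_support_iff, hfc] at hd
    obtain ⟨s, hs, hne⟩ := Finset.exists_ne_zero_of_sum_ne_zero hd
    refine ⟨s, Nat.lt_succ_iff.mp (Finset.mem_range.mp hs), ?_⟩
    by_contra h
    rw [if_neg (fun h' => h h'.symm)] at hne
    exact hne rfl
  -- the descFactorial products
  have hPa : (∏ i ∈ a.support, ((a i).descFactorial (a i) : k)) = 1 := by
    apply Finset.prod_eq_one
    intro i hi
    have hi' := Finsupp.support_add hi
    simp only [Finset.mem_union] at hi'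
    have : i = 0 ∨ i = 2 := by
      rcases hi' with h | h
      · exact Or.inl (Finset.mem_singleton.mp (Finsupp.support_single_subset h))
      · exact Or.inr (Finset.mem_singleton.mp (Finsupp.support_single_subset h))
    rcases this with rfl | rfl <;> simp [ha, Finsupp.single_apply]
  have hPb : (∏ i ∈ b.support, ((b i).descFactorial (b i) : k)) = 2 := by
    rw [hb, Finsupp.support_single_ne_zero 1 (two_ne_zero)]
    norm_num [Finsupp.single_apply, Nat.descFactorial]
  -- coefficients of f at a and b
  have hca : coeff a f = if l = 2 then 2 else 0 := by
    rw [hfc]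
    rcases eq_or_ne l 2 with hl | hl
    · subst hl
      rw [if_pos rfl]
      have e0 : Finsupp.single 0 1 + Finsupp.single (2 - 0) 1 = a := by rw [ha]
      have e2 : Finsupp.single 2 1 + Finsupp.single (2 - 2) 1 = a := by
        rw [ha]; exact add_comm _ _
      have e1 : Finsupp.single 1 1 + Finsupp.single (2 - 1) 1 ≠ a := by
        intro h
        have := DFunLike.congr_fun h 0
        simp [ha, Finsupp.single_apply] at this
      rw [show (2 : ℕ) + 1 = 3 from rfl, Finset.sum_range_succ, Finset.sum_range_succ,
        Finset.sum_range_succ, Finset.sum_range_zero, if_pos e0, if_neg e1, if_pos e2]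
      norm_num
    · rw [if_neg hl]
      apply Finset.sum_eq_zero
      intro s hs
      rw [if_neg]
      intro h
      have hsl : s ≤ l := Nat.lt_succ_iff.mp (Finset.mem_range.mp hs)
      have := single_pair_le_a (le_of_eq (by rw [h, ha]))
      omega
  have hcb : coeff b f = if l = 2 then 1 else 0 := by
    rw [hfc]
    rcases eq_or_ne l 2 with hl | hl
    · subst hl
      rw [if_pos rfl]
      have e1 : Finsupp.single 1 1 + Finsupp.single (2 - 1) 1 = b := by
        rw [hb]; exact (Finsupp.single_add 1 1 1).symm
      have e0 : Finsupp.single 0 1 + Finsupp.single (2 - 0) 1 ≠ b := by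
        intro h
        have := DFunLike.congr_fun h 0
        simp [hb, Finsupp.single_apply] at this
      have e2 : Finsupp.single 2 1 + Finsupp.single (2 - 2) 1 ≠ b := by
        intro h
        have := DFunLike.congr_fun h 0
        simp [hb, Finsupp.single_apply] at this
      rw [show (2 : ℕ) + 1 = 3 from rfl, Finset.sum_range_succ, Finset.sum_range_succ,
        Finset.sum_range_succ, Finset.sum_range_zero, if_neg e0, if_pos e1, if_neg e2]
      norm_num
    · rw [if_neg hl]
      apply Finset.sum_eq_zero
      intro s hs
      rw [if_neg]
      intro h
      have hsl : s ≤ l := Nat.lt_succ_iff.mp (Finset.mem_range.mp hs)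
      have := single_pair_le_b (le_of_eq (by rw [h, hb]))
      omega
  -- now unfold diffApply
  show (∑ d ∈ f.support, ∑ e ∈ W.support,
      if d ≤ e then
        monomial (e - d)
          (f.coeff d * W.coeff e * ∏ i ∈ d.support, ((e i).descFactorial (d i) : k))
      else 0) = 0
  have hterm : ∀ d ∈ f.support,
      (∑ e ∈ W.support,
        if d ≤ e then
          monomial (e - d)
            (f.coeff d * W.coeff e * ∏ i ∈ d.support, ((e i).descFactorial (d i) : k))
        else 0)
      = (if d = a then
          monomial (a - d)
            (f.coeff d * W.coeff a * ∏ i ∈ d.support, ((a i).descFactorial (d i) : k))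
        else 0)
        + (if d = b then
          monomial (b - d)
            (f.coeff d * W.coeff b * ∏ i ∈ d.support, ((b i).descFactorial (d i) : k))
        else 0) := by
    intro d hd
    rw [Finset.sum_subset hWsupp (by
      intro e _ he
      rw [notMem_support_iff] at he
      simp [he]), Finset.sum_pair hab]
    obtain ⟨s, hsl, rfl⟩ := hfsupp d hd
    congr 1
    · congr 1
      refine propext ⟨?_, le_of_eq⟩
      intro h
      rcases single_pair_le_a (s := s) (t := l - s) (by rw [ha] at h; exact h) with ⟨h1, h2⟩ | ⟨h1, h2⟩
      · rw [h1] at h2 ⊢; rw [h2, ha]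
      · rw [h1] at h2 ⊢; rw [h2, ha]; exact add_comm _ _
    · congr 1
      refine propext ⟨?_, le_of_eq⟩
      intro h
      obtain ⟨h1, h2⟩ := single_pair_le_b (s := s) (t := l - s) (by rw [hb] at h; exact h)
      rw [h1] at h2 ⊢
      rw [h2, hb]
      exact (Finsupp.single_add 1 1 1).symm
  rw [Finset.sum_congr rfl hterm, Finset.sum_add_distrib,
    Finset.sum_ite_eq' f.support a _, Finset.sum_ite_eq' f.support b _]
  have hIa : (if a ∈ f.support then
      monomial (a - a)
        (f.coeff a * W.coeff a * ∏ i ∈ a.support, ((a i).descFactorial (a i) : k))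
      else 0)
      = monomial 0 (f.coeff a) := by
    by_cases h : a ∈ f.support
    · rw [if_pos h, tsub_self, hWa, hPa, mul_one, mul_one]
    · rw [if_neg h, notMem_support_iff.mp h, map_zero]
  have hIb : (if b ∈ f.support then
      monomial (b - b)
        (f.coeff b * W.coeff b * ∏ i ∈ b.support, ((b i).descFactorial (b i) : k))
      else 0)
      = monomial 0 (-(2 * f.coeff b)) := by
    by_cases h : b ∈ f.support
    · rw [if_pos h, tsub_self, hWb, hPb]
      ring_nf
    · rw [if_neg h, notMem_support_iff.mp h]
      simp
  rw [hIa, hIb, ← map_add, hca, hcb]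
  rcases eq_or_ne l 2 with hl | hl <;> simp [hl]
end
end

section
/- Let P be a homogeneous polynomial of degree d+1 in the inverse system (I_n^arc)^⊥ of the arc ideal of the double point, over a field k of characteristic zero. Then for any scalars ξ_1,...,ξ_d ∈ k and vectors α_1,...,α_d ∈ k^n, substituting the tuple of power series Σ_{m=1}^d α_m e^{ξ_m t} (with e^{ξt} = Σ_j ξ^j t^j / j! ∈ k[[t]]) for x (and its termwise derivatives for the derivative variables) annihilates P: P(α_1 e^{ξ_1 t} + ... + α_d e^{ξ_d t}) = 0. -/
open MvPolynomial

noncomputable section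

/-- The ideal of the arc scheme of the double point in `n` variables:
generated by the coefficients of `t^ℓ` in `x_i(t) * x_j(t)`. -/
def arcIdeal (k : Type*) [CommSemiring k] (n : ℕ) : Ideal (MvPolynomial (Fin n × ℕ) k) :=
  Ideal.span { g | ∃ (i j : Fin n) (l : ℕ),
    g = ∑ s ∈ Finset.range (l + 1), X (i, s) * X (j, l - s) }

/-- The Macaulay inverse system of the arc ideal. -/
def invSys (k : Type*) [CommSemiring k] (n : ℕ) : Set (MvPolynomial (Fin n × ℕ) k) :=
  { P | ∀ f ∈ arcIdeal k n, diffApply f P = 0 }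

/-- The exponential power series `e^{ξ t} = ∑_j ξ^j t^j / j!`. -/
def expPS {k : Type*} [Field k] (ξ : k) : PowerSeries k :=
  PowerSeries.mk fun j => ξ ^ j / (j.factorial : k)

/-!
Write `c m (j, i) = α_{m,j} ξ_m^i`. The substitution factors as the linear substitution
`x_j^(i) ↦ ∑_m c m (j, i) y_m` into `k[y_1, …, y_d]`, followed by `y_m ↦ e^{ξ_m t}`. The
intermediate polynomial `Q` is homogeneous of degree `d + 1`, and by the chain rule
`∂²Q/∂y_m²` is the image of `D_m² P`, where `D_m = ∑_v c m v ∂/∂x_v`. Expanding,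
`D_m² P = ∑_{i,j} α_{m,i} α_{m,j} ∑_l ξ_m^l ∑_{s+r=l} ∂_{(i,s)} ∂_{(j,r)} P`, and each inner
operator is the generator `∑_{s+r=l} x_i^(s) x_j^(r)` of the arc ideal acting on `P`, so it
vanishes. Hence no monomial of `Q` contains a square, so `Q` has degree at most `d`: `Q = 0`.
-/

open Finset in
theorem sum_range_sum_range_eq_sum_antidiagonals {M : Type*} [AddCommMonoid M] {N : ℕ}
    {F : ℕ → ℕ → M} (hF : ∀ s r, N ≤ s ∨ N ≤ r → F s r = 0) :
    ∑ s ∈ range N, ∑ r ∈ range N, F s r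
      = ∑ l ∈ range (2 * N), ∑ s ∈ range (l + 1), F s (l - s) := by
  rw [sum_range_diag_flip]
  refine (sum_congr rfl fun s hs =>
    sum_subset (range_subset_range.mpr ?_) fun r _ hr => ?_).trans
      (sum_subset (range_subset_range.mpr (by omega)) fun s _ hs => ?_)
  · have := mem_range.mp hs; omega
  · exact hF s r (.inr (by simpa using hr))
  · exact sum_eq_zero fun r _ => hF s r (.inl (by simpa using hs))

open Finset in
theorem sum_range_sum_range_pow_smul_eq_zero {R M : Type*} [Semiring R] [AddCommMonoid M]
    [Module R M] {N : ℕ} {F : ℕ → ℕ → M} (x : R) (hF : ∀ s r, N ≤ s ∨ N ≤ r → F s r = 0)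
    (hdiag : ∀ l, ∑ s ∈ range (l + 1), F s (l - s) = 0) :
    ∑ s ∈ range N, ∑ r ∈ range N, x ^ (s + r) • F s r = 0 := by
  rw [sum_range_sum_range_eq_sum_antidiagonals fun s r h => by rw [hF s r h, smul_zero]]
  refine sum_eq_zero fun l _ => ?_
  rw [sum_congr rfl fun s hs => by rw [Nat.add_sub_cancel' (mem_range_succ_iff.mp hs)],
    ← smul_sum, hdiag, smul_zero]

section DiffApply

variable {k σ : Type*} [CommSemiring k]

open Classical in
theorem diffApply_eq_sum_of_support_subset {f : MvPolynomial σ k} (P : MvPolynomial σ k)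
    {T : Finset (σ →₀ ℕ)} (hT : f.support ⊆ T) :
    diffApply f P = ∑ d ∈ T, ∑ e ∈ P.support,
      if d ≤ e then
        monomial (e - d)
          (f.coeff d * P.coeff e * ∏ i ∈ d.support, ((e i).descFactorial (d i) : k))
      else 0 := by
  refine Finset.sum_subset hT fun d _ hd => Finset.sum_eq_zero fun e _ => ?_
  simp [notMem_support_iff.mp hd]

theorem diffApply_add (f g P : MvPolynomial σ k) :
    diffApply (f + g) P = diffApply f P + diffApply g P := by
  classical
  rw [diffApply_eq_sum_of_support_subset P (support_add (p := f) (q := g)),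
    diffApply_eq_sum_of_support_subset P (Finset.subset_union_left (s₂ := g.support)),
    diffApply_eq_sum_of_support_subset P (Finset.subset_union_right (s₁ := f.support)),
    ← Finset.sum_add_distrib]
  refine Finset.sum_congr rfl fun d _ => ?_
  rw [← Finset.sum_add_distrib]
  refine Finset.sum_congr rfl fun e _ => ?_
  split_ifs
  · rw [coeff_add, add_mul, add_mul, map_add]
  · rw [add_zero]

theorem diffApply_sum {ι : Type*} (T : Finset ι) (f : ι → MvPolynomial σ k)
    (P : MvPolynomial σ k) :
    diffApply (∑ s ∈ T, f s) P = ∑ s ∈ T, diffApply (f s) P :=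
  map_sum ({ toFun := (diffApply · P)
             map_zero' := by simp [diffApply]
             map_add' := (diffApply_add · · P) } : MvPolynomial σ k →+ MvPolynomial σ k) f T

theorem prod_descFactorial_single_add_single (v w : σ) (e : σ →₀ ℕ) :
    ∏ i ∈ (Finsupp.single v 1 + Finsupp.single w 1 : σ →₀ ℕ).support,
        (e i).descFactorial ((Finsupp.single v 1 + Finsupp.single w 1 : σ →₀ ℕ) i)
      = e w * (e - Finsupp.single w 1 : σ →₀ ℕ) v := by
  classical
  by_cases hvw : v = w
  · subst hvw
    rw [← Finsupp.single_add, Finsupp.support_single _ two_ne_zero,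
      Finset.prod_singleton, Finsupp.single_eq_same]
    simp [Nat.descFactorial, mul_comm]
  · rw [Finsupp.support_add_eq (by simpa using hvw), Finsupp.support_single _ one_ne_zero,
      Finsupp.support_single _ one_ne_zero,
      Finset.prod_union (Finset.disjoint_singleton.mpr hvw)]
    simp [Finsupp.single_apply, hvw, Ne.symm hvw, mul_comm]

theorem mul_eq_zero_of_not_single_add_single_le {v w : σ} {e : σ →₀ ℕ}
    (h : ¬ Finsupp.single v 1 + Finsupp.single w 1 ≤ e) :
    e w * (e - Finsupp.single w 1 : σ →₀ ℕ) v = 0 := by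
  by_contra hne
  obtain ⟨hw, hv⟩ := Nat.mul_ne_zero_iff.mp hne
  have hwe : Finsupp.single w 1 ≤ e := Finsupp.single_le_iff.mpr (Nat.one_le_iff_ne_zero.mpr hw)
  exact h (add_comm (Finsupp.single v 1) _ ▸ (le_tsub_iff_left hwe).mp
    (Finsupp.single_le_iff.mpr (Nat.one_le_iff_ne_zero.mpr hv)))

theorem diffApply_X_mul_X [Nontrivial k] (v w : σ) (P : MvPolynomial σ k) :
    diffApply (X v * X w) P = pderiv v (pderiv w P) := by
  classical
  have hX : (X v * X w : MvPolynomial σ k)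
      = monomial (Finsupp.single v 1 + Finsupp.single w 1) 1 := by
    rw [X, X, monomial_mul, one_mul]
  conv_rhs => rw [P.as_sum, map_sum, map_sum]
  rw [hX, diffApply, support_monomial, if_neg one_ne_zero, Finset.sum_singleton]
  refine Finset.sum_congr rfl fun e _ => ?_
  rw [coeff_monomial, if_pos rfl, one_mul, pderiv_monomial, pderiv_monomial, ← Nat.cast_prod,
    prod_descFactorial_single_add_single, mul_assoc, ← Nat.cast_mul]
  split_ifs with h
  · rw [add_comm, tsub_add_eq_tsub_tsub]
  · rw [mul_eq_zero_of_not_single_add_single_le h, Nat.cast_zero, mul_zero, monomial_zero]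

theorem sum_pderiv_pderiv_eq_zero_of_mem_invSys {n : ℕ} [Nontrivial k]
    {P : MvPolynomial (Fin n × ℕ) k} (hP : P ∈ invSys k n) (i j : Fin n) (l : ℕ) :
    ∑ s ∈ Finset.range (l + 1), pderiv (i, s) (pderiv (j, l - s) P) = 0 := by
  rw [← hP _ (Ideal.subset_span ⟨i, j, l, rfl⟩), diffApply_sum]
  simp only [diffApply_X_mul_X]

end DiffApply

section DirDeriv

variable {k σ : Type*} [CommRing k]

/-- The derivation `∑_v q v • ∂/∂x_v`, defined through `X v ↦ C (q v)` so that `q` need not be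
finitely supported. -/
def dirDeriv (q : σ → k) : Derivation k (MvPolynomial σ k) (MvPolynomial σ k) :=
  mkDerivation k fun v => C (q v)

@[simp]
theorem dirDeriv_X (q : σ → k) (v : σ) : dirDeriv q (X v) = C (q v) :=
  mkDerivation_X k _ v

theorem pderiv_eq_dirDeriv [DecidableEq σ] (v : σ) :
    (pderiv v : Derivation k (MvPolynomial σ k) (MvPolynomial σ k))
      = dirDeriv (Pi.single v 1) :=
  derivation_ext fun i => by
    rw [pderiv_X, dirDeriv_X, Pi.single_apply, Pi.single_apply]
    split_ifs <;> simp

theorem dirDeriv_comm (a b : σ → k) (P : MvPolynomial σ k) :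
    dirDeriv a (dirDeriv b P) = dirDeriv b (dirDeriv a P) := by
  have h : ⁅dirDeriv a, dirDeriv b⁆ = 0 :=
    derivation_ext fun i => by simp [Derivation.commutator_apply, derivation_C]
  exact sub_eq_zero.mp (by rw [← Derivation.commutator_apply, h, Derivation.zero_apply])

theorem dirDeriv_pderiv_comm (q : σ → k) (v : σ) (P : MvPolynomial σ k) :
    dirDeriv q (pderiv v P) = pderiv v (dirDeriv q P) := by
  classical
  rw [pderiv_eq_dirDeriv, dirDeriv_comm]

theorem pderiv_comm (v w : σ) (P : MvPolynomial σ k) :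
    pderiv v (pderiv w P) = pderiv w (pderiv v P) := by
  classical
  rw [pderiv_eq_dirDeriv v, dirDeriv_pderiv_comm]

theorem dirDeriv_eq_sum_pderiv (q : σ → k) {P : MvPolynomial σ k} {S : Finset σ}
    (hS : P.vars ⊆ S) : dirDeriv q P = ∑ v ∈ S, q v • pderiv v P := by
  classical
  have hsum (x : MvPolynomial σ k) :
      (∑ v ∈ S, q v • pderiv v : Derivation k (MvPolynomial σ k) (MvPolynomial σ k)) x
        = ∑ v ∈ S, q v • pderiv v x :=
    map_sum ({ toFun := fun D => D x, map_zero' := rfl, map_add' := fun _ _ => rfl } :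
      Derivation k (MvPolynomial σ k) (MvPolynomial σ k) →+ MvPolynomial σ k) _ S
  rw [← hsum]
  refine derivation_eq_of_forall_mem_vars fun i hi => ?_
  rw [dirDeriv_X, hsum, Finset.sum_eq_single_of_mem i (hS hi), pderiv_X_self, smul_eq_C_mul,
    mul_one]
  intro v _ hvi
  rw [pderiv_X_of_ne hvi.symm, smul_zero]

end DirDeriv

theorem derivation_aeval_eq_aeval_derivation {k σ A : Type*} [CommSemiring k] [CommSemiring A]
    [Algebra k A] {ψ : σ → A} {D : Derivation k A A}
    {D' : Derivation k (MvPolynomial σ k) (MvPolynomial σ k)}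
    (h : ∀ v, D (ψ v) = aeval ψ (D' (X v))) (P : MvPolynomial σ k) :
    D (aeval ψ P) = aeval ψ (D' P) := by
  induction P using MvPolynomial.induction_on with
  | C a => rw [aeval_C, Derivation.map_algebraMap, derivation_C, map_zero]
  | add p p' hp hp' => rw [map_add, map_add, hp, hp', map_add, map_add]
  | mul_X p v hp =>
    rw [map_mul, aeval_X, Derivation.leibniz, hp, h, Derivation.leibniz, map_add, smul_eq_mul,
      smul_eq_mul, smul_eq_mul, smul_eq_mul, map_mul, map_mul, aeval_X]

section LinearSubstitution

variable {k σ τ : Type*} [CommRing k] [Fintype τ]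

def linearSubst (c : τ → σ → k) (v : σ) : MvPolynomial τ k :=
  ∑ m, C (c m v) * X m

theorem isHomogeneous_linearSubst (c : τ → σ → k) (v : σ) :
    (linearSubst c v).IsHomogeneous 1 :=
  IsHomogeneous.sum _ _ _ fun m _ => isHomogeneous_C_mul_X _ m

theorem pderiv_aeval_linearSubst (c : τ → σ → k) (m : τ) (P : MvPolynomial σ k) :
    pderiv m (aeval (linearSubst c) P) = aeval (linearSubst c) (dirDeriv (c m) P) := by
  refine derivation_aeval_eq_aeval_derivation (fun v => ?_) P
  rw [dirDeriv_X, aeval_C, linearSubst, map_sum, Finset.sum_eq_single m]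
  · rw [pderiv_C_mul, pderiv_X_self, mul_one, algebraMap_eq]
  · intro m' _ hm'
    rw [pderiv_C_mul, pderiv_X_of_ne hm', mul_zero]
  · exact fun h => absurd (Finset.mem_univ m) h

end LinearSubstitution

section Multilinear

variable {k τ : Type*} [CommRing k] [IsDomain k] [CharZero k] {Q : MvPolynomial τ k}

theorem coeff_eq_zero_of_pderiv_pderiv_eq_zero {m : τ} (h : pderiv m (pderiv m Q) = 0)
    {u : τ →₀ ℕ} (hu : 2 ≤ u m) : coeff u Q = 0 := by
  classical
  obtain ⟨w, rfl⟩ : ∃ w, u = w + Finsupp.single m 1 + Finsupp.single m 1 :=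
    ⟨u - Finsupp.single m 2, by
      rw [add_assoc, ← Finsupp.single_add, tsub_add_cancel_of_le (Finsupp.single_le_iff.mpr hu)]⟩
  have := congr_arg (coeff w) h
  rw [coeff_pderiv, coeff_pderiv, coeff_zero] at this
  exact (mul_eq_zero.mp ((mul_eq_zero.mp this).resolve_right
    (Nat.cast_add_one_ne_zero _))).resolve_right (Nat.cast_add_one_ne_zero _)

theorem eq_zero_of_isHomogeneous_of_pderiv_pderiv_eq_zero [Fintype τ] {D : ℕ}
    (hQ : Q.IsHomogeneous D) (hD : Fintype.card τ < D) (h : ∀ m, pderiv m (pderiv m Q) = 0) :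
    Q = 0 := by
  ext u
  rw [coeff_zero]
  by_cases hu : u.degree = D
  · obtain ⟨m, hm⟩ : ∃ m, 2 ≤ u m := by
      by_contra! hle
      have : u.degree ≤ Fintype.card τ := by
        rw [Finsupp.degree_eq_sum, Fintype.card_eq_sum_ones]
        exact Finset.sum_le_sum fun m _ => Nat.le_of_lt_succ (hle m)
      omega
    exact coeff_eq_zero_of_pderiv_pderiv_eq_zero (h m) hm
  · exact hQ.coeff_eq_zero hu

end Multilinear

open Finset in
theorem dirDeriv_dirDeriv_eq_zero_of_mem_invSys {k : Type*} [CommRing k] [Nontrivial k]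
    {n : ℕ} {P : MvPolynomial (Fin n × ℕ) k} (hP : P ∈ invSys k n) (a : Fin n → k) (x : k) :
    dirDeriv (fun v => a v.1 * x ^ v.2) (dirDeriv (fun v => a v.1 * x ^ v.2) P) = 0 := by
  set q : Fin n × ℕ → k := fun v => a v.1 * x ^ v.2
  obtain ⟨N, hN⟩ : ∃ N, ∀ v ∈ P.vars, v.2 < N :=
    ⟨P.vars.sup Prod.snd + 1, fun v hv => Nat.lt_succ_of_le (le_sup (f := Prod.snd) hv)⟩
  have hS : P.vars ⊆ univ ×ˢ range N := fun v hv =>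
    mem_product.mpr ⟨mem_univ _, mem_range.mpr (hN v hv)⟩
  have hout : ∀ i s, N ≤ s → pderiv (i, s) P = 0 := fun i s hs =>
    pderiv_eq_zero_of_notMem_vars fun hv => (hN _ hv).not_ge hs
  have hbox : ∀ i j s r, N ≤ s ∨ N ≤ r → pderiv (i, s) (pderiv (j, r) P) = 0
    | i, j, s, r, .inl hs => by rw [pderiv_comm, hout i s hs, map_zero]
    | i, j, s, r, .inr hr => by rw [hout j r hr, map_zero]
  calc dirDeriv q (dirDeriv q P)
      = ∑ w ∈ univ ×ˢ range N, ∑ v ∈ univ ×ˢ range N,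
          (q w * q v) • pderiv w (pderiv v P) := by
        rw [dirDeriv_eq_sum_pderiv q hS, map_sum]
        simp only [Derivation.map_smul, dirDeriv_pderiv_comm, dirDeriv_eq_sum_pderiv q hS,
          map_sum, smul_sum, smul_smul]
    _ = ∑ i, ∑ j, (a i * a j) • ∑ s ∈ range N, ∑ r ∈ range N,
          x ^ (s + r) • pderiv (i, s) (pderiv (j, r) P) := by
        simp only [sum_product, smul_sum, smul_smul]
        refine sum_congr rfl fun i _ => sum_comm.trans <| sum_congr rfl fun j _ =>
          sum_congr rfl fun s _ => sum_congr rfl fun r _ => ?_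
        rw [pow_add, ← mul_assoc]
        congr 1
        ring
    _ = 0 := sum_eq_zero fun i _ => sum_eq_zero fun j _ => by
        rw [sum_range_sum_range_pow_smul_eq_zero x (hbox i j)
          (sum_pderiv_pderiv_eq_zero_of_mem_invSys hP i j), smul_zero]

/-- a homogeneous element of degree `d+1` of the inverse system of the arc
ideal vanishes after substituting `x_j^(i) ↦` the `i`-th derivative of the `j`-th entry of
`∑_{m=1}^d α_m e^{ξ_m t}`, i.e. `x_j^(i) ↦ ∑_m α_{m,j} ξ_m^i e^{ξ_m t}`. -/
theorem stmt5 {k : Type*} [Field k] [CharZero k] (n d : ℕ)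
    (P : MvPolynomial (Fin n × ℕ) k)
    (hP : P ∈ invSys k n) (hhom : P.IsHomogeneous (d + 1))
    (ξ : Fin d → k) (α : Fin d → Fin n → k) :
    aeval (fun v : Fin n × ℕ =>
      ∑ m : Fin d, PowerSeries.C (α m v.1 * ξ m ^ v.2) * expPS (ξ m)) P = 0 := by
  set c : Fin d → Fin n × ℕ → k := fun m v => α m v.1 * ξ m ^ v.2
  have hQ : aeval (linearSubst c) P = 0 := by
    refine eq_zero_of_isHomogeneous_of_pderiv_pderiv_eq_zero
      (by simpa using hhom.aeval _ (isHomogeneous_linearSubst c)) (by simp) fun m => ?_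
    rw [pderiv_aeval_linearSubst, pderiv_aeval_linearSubst,
      dirDeriv_dirDeriv_eq_zero_of_mem_invSys hP, map_zero]
  calc aeval (fun v : Fin n × ℕ =>
        ∑ m : Fin d, PowerSeries.C (α m v.1 * ξ m ^ v.2) * expPS (ξ m)) P
      = aeval (fun m => expPS (ξ m)) (aeval (linearSubst c) P) := by
        rw [← AlgHom.comp_apply, comp_aeval]
        congr
        funext v
        simp [linearSubst, c]
    _ = 0 := by rw [hQ, map_zero]
end
end

section
/- Every minor of the infinite Hankel matrix H (with rows indexed by i ≥ 0, columns indexed by pairs (j, m) with 1 ≤ j ≤ n, m ≥ 0, and entry x_j^(i+m)) belongs to the inverse system (I_n^arc)^⊥ of the arc ideal of the double point, over a field of characteristic zero. -/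
open MvPolynomial

noncomputable section

/-!
Since `f ↦ f(∂)` is an algebra map into the endomorphisms of the polynomial ring and the arc
ideal is generated by the quadrics `∑_{a+b=L} x_i^(a) x_j^(b)`, a polynomial `P` lies in the
inverse system iff `∑_{a+b=L} ∂_{(i,a)} ∂_{(j,b)} P = 0` for all `i, j, L`.

For a minor `P = det H` of the Hankel matrix every entry is a variable, so by the Leibniz rule
this second derivative is a sum over ordered pairs of distinct columns `t ≠ t'` of determinants
in which column `t` is differentiated by `∂_{(i,a)}` and column `t'` by `∂_{(j,b)}`. Expanding
these two columns in unit vectors `e_s, e_{s'}` and summing over `a + b = L`, the coefficient of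
`det(… e_s at t, e_{s'} at t' …)` is the indicator of `r_s + m_t + r_{s'} + m_{t'} = L`, where
column `t` is `(j_t, m_t)`. By the Hankel structure it is symmetric in `(s, s')`, whereas the
determinant is alternating in `(s, s')`. The terms for `(s, s')` and `(s', s)` cancel and the
diagonal ones vanish.
-/

theorem Finsupp.prod_descFactorial_add {σ : Type*} (d₁ d₂ e : σ →₀ ℕ) :
    ∏ i ∈ (d₁ + d₂).support, (e i).descFactorial ((d₁ + d₂) i) =
      (∏ i ∈ d₁.support, ((e - d₂) i).descFactorial (d₁ i)) *
        ∏ i ∈ d₂.support, (e i).descFactorial (d₂ i) := by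
  classical
  have extend : ∀ d : σ →₀ ℕ, d.support ⊆ d₁.support ∪ d₂.support → ∀ g : σ → ℕ,
      ∏ i ∈ d.support, (g i).descFactorial (d i) =
        ∏ i ∈ d₁.support ∪ d₂.support, (g i).descFactorial (d i) := fun d hd g =>
    prod_of_support_subset d hd (fun i m => (g i).descFactorial m) fun _ _ =>
      Nat.descFactorial_zero _
  rw [extend _ support_add, extend _ Finset.subset_union_left,
    extend _ Finset.subset_union_right, ← Finset.prod_mul_distrib]
  refine Finset.prod_congr rfl fun i _ => ?_
  have := Nat.descFactorial_mul_descFactorial (n := e i) (Nat.le_add_left (d₂ i) (d₁ i))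
  simp only [add_apply, tsub_apply, Nat.add_sub_cancel] at this ⊢
  exact this.symm

namespace MvPolynomial

variable {σ k : Type*} [CommSemiring k]

open Classical in
def iteratedPderiv (d : σ →₀ ℕ) : MvPolynomial σ k →ₗ[k] MvPolynomial σ k :=
  (basisMonomials σ k).constr k fun e =>
    if d ≤ e then monomial (e - d) (∏ i ∈ d.support, ((e i).descFactorial (d i) : k)) else 0

open Classical in
theorem iteratedPderiv_monomial (d e : σ →₀ ℕ) (a : k) :
    iteratedPderiv d (monomial e a) =
      if d ≤ e then monomial (e - d) (a * ∏ i ∈ d.support, ((e i).descFactorial (d i) : k))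
      else 0 := by
  have h := (basisMonomials σ k).constr_basis k (fun e => if d ≤ e then monomial (e - d)
    (∏ i ∈ d.support, ((e i).descFactorial (d i) : k)) else (0 : MvPolynomial σ k)) e
  rw [coe_basisMonomials] at h
  rw [← mul_one a, ← smul_eq_mul, ← smul_monomial, map_smul, iteratedPderiv, h]
  split_ifs <;> simp [smul_monomial]

theorem iteratedPderiv_zero :
    iteratedPderiv (0 : σ →₀ ℕ) = (LinearMap.id : Module.End k (MvPolynomial σ k)) := by
  refine linearMap_ext fun e => LinearMap.ext fun a => ?_
  simp [iteratedPderiv_monomial]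

theorem iteratedPderiv_add (d₁ d₂ : σ →₀ ℕ) :
    iteratedPderiv (d₁ + d₂) =
      (iteratedPderiv d₁ ∘ₗ iteratedPderiv d₂ : Module.End k (MvPolynomial σ k)) := by
  classical
  refine linearMap_ext fun e => LinearMap.ext fun a => ?_
  simp only [LinearMap.comp_apply, iteratedPderiv_monomial]
  by_cases h₂ : d₂ ≤ e
  · by_cases h₁ : d₁ ≤ e - d₂
    · have h : d₁ + d₂ ≤ e := by simpa [le_tsub_iff_right h₂] using h₁
      rw [if_pos h₂, iteratedPderiv_monomial, if_pos h₁, if_pos h, tsub_tsub, add_comm d₂,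
        ← Nat.cast_prod, Finsupp.prod_descFactorial_add, Nat.cast_mul, Nat.cast_prod,
        Nat.cast_prod]
      congr 1
      ring
    · have h : ¬ d₁ + d₂ ≤ e := by simpa [le_tsub_iff_right h₂] using h₁
      rw [if_pos h₂, iteratedPderiv_monomial, if_neg h₁, if_neg h]
  · have h : ¬ d₁ + d₂ ≤ e := fun h => h₂ (le_trans le_add_self h)
    rw [if_neg h₂, if_neg h, map_zero]

theorem iteratedPderiv_single (i : σ) :
    iteratedPderiv (Finsupp.single i 1) = (pderiv (R := k) i).toLinearMap := by
  classical
  refine linearMap_ext fun e => LinearMap.ext fun a => ?_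
  simp only [LinearMap.comp_apply, iteratedPderiv_monomial, Derivation.coeFn_coe,
    pderiv_monomial, Finsupp.support_single _ one_ne_zero, Finset.prod_singleton,
    Finsupp.single_eq_same, Nat.descFactorial_one]
  split_ifs with h
  · rfl
  · rw [Finsupp.single_le_iff, not_le, Nat.lt_one_iff] at h
    simp [h]

def iteratedPderivHom : Multiplicative (σ →₀ ℕ) →* Module.End k (MvPolynomial σ k) where
  toFun d := iteratedPderiv d.toAdd
  map_one' := iteratedPderiv_zero
  map_mul' d₁ d₂ := iteratedPderiv_add d₁.toAdd d₂.toAdd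

def diffOp : MvPolynomial σ k →ₐ[k] Module.End k (MvPolynomial σ k) :=
  AddMonoidAlgebra.lift k _ _ iteratedPderivHom

theorem diffOp_monomial (d : σ →₀ ℕ) (a : k) :
    diffOp (monomial d a) = a • iteratedPderiv d :=
  AddMonoidAlgebra.lift_single _ d a

theorem diffOp_X (i : σ) : diffOp (X i) = (pderiv (R := k) i).toLinearMap := by
  rw [X, diffOp_monomial, one_smul, iteratedPderiv_single]

theorem diffApply_eq_diffOp (f P : MvPolynomial σ k) : diffApply f P = diffOp f P := by
  classical
  conv_rhs => rw [f.as_sum, P.as_sum]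
  simp only [map_sum, LinearMap.coe_sum, Finset.sum_apply, diffOp_monomial,
    LinearMap.smul_apply, iteratedPderiv_monomial, diffApply]
  rw [Finset.sum_comm]
  refine Finset.sum_congr rfl fun d _ => Finset.sum_congr rfl fun e _ => ?_
  split_ifs <;> simp [smul_monomial, mul_assoc]

def apolarAnnihilator (P : MvPolynomial σ k) : Ideal (MvPolynomial σ k) where
  carrier := {f | diffOp f P = 0}
  add_mem' hf hg := by simp_all
  zero_mem' := by simp
  smul_mem' g f hf := by simp_all [Module.End.mul_apply]

theorem mem_invSys_iff {n : ℕ} {P : MvPolynomial (Fin n × ℕ) k} :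
    P ∈ invSys k n ↔ ∀ (i j : Fin n) (L : ℕ),
      ∑ a ∈ Finset.range (L + 1), pderiv (i, a) (pderiv (j, L - a) P) = 0 := by
  have h : P ∈ invSys k n ↔ arcIdeal k n ≤ apolarAnnihilator P := by
    simp [invSys, SetLike.le_def, apolarAnnihilator, diffApply_eq_diffOp]
  have hgen : ∀ (i j : Fin n) (L : ℕ),
      diffOp (∑ a ∈ Finset.range (L + 1), X (i, a) * X (j, L - a)) P =
        ∑ a ∈ Finset.range (L + 1), pderiv (i, a) (pderiv (j, L - a) P) := by
    simp [diffOp_X, Module.End.mul_apply]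
  rw [h, arcIdeal, Ideal.span_le]
  constructor
  · intro hP i j L
    exact (hgen i j L).symm.trans (hP ⟨i, j, L, rfl⟩)
  · rintro hP g ⟨i, j, L, rfl⟩
    exact (hgen i j L).trans (hP i j L)

end MvPolynomial

namespace Derivation

variable {R A : Type*} [CommSemiring R] [CommRing A] [Algebra R A]

theorem map_prod_eq_sum_update (D : Derivation R A A) {ι : Type*} [DecidableEq ι]
    (s : Finset ι) (f : ι → A) :
    D (∏ i ∈ s, f i) = ∑ i ∈ s, ∏ j ∈ s, Function.update f i (D (f i)) j := by
  induction s using Finset.induction_on with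
  | empty => simp
  | insert a s ha ih =>
    rw [Finset.prod_insert ha, leibniz, ih, Finset.sum_insert ha, Finset.prod_insert ha,
      Function.update_self, Finset.prod_congr rfl fun j hj =>
        Function.update_of_ne (ne_of_mem_of_not_mem hj ha) .., smul_eq_mul, smul_eq_mul,
      Finset.mul_sum, add_comm]
    congr 1
    · ring
    · refine Finset.sum_congr rfl fun i hi => ?_
      rw [Finset.prod_insert ha, Function.update_of_ne (ne_of_mem_of_not_mem hi ha).symm]

variable {m : Type*} [Fintype m] [DecidableEq m]

theorem map_det (D : Derivation R A A) (M : Matrix m m A) :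
    D M.det = ∑ t, (M.updateCol t fun s => D (M s t)).det := by
  simp only [Matrix.det_apply, map_sum, Units.smul_def, map_zsmul, map_prod_eq_sum_update,
    Finset.smul_sum]
  rw [Finset.sum_comm]
  refine Finset.sum_congr rfl fun t _ => Finset.sum_congr rfl fun σ _ => ?_
  congr 1
  refine Finset.prod_congr rfl fun i _ => ?_
  rw [Matrix.updateCol_apply, Function.update_apply]
  split_ifs with h <;> simp [h]

theorem map_map_det (D₁ D₂ : Derivation R A A) (M : Matrix m m A)
    (hM : ∀ s t, D₁ (D₂ (M s t)) = 0) :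
    D₁ (D₂ M.det) = ∑ t', ∑ t ∈ Finset.univ.erase t',
      ((M.updateCol t' fun s => D₂ (M s t')).updateCol t fun s => D₁ (M s t)).det := by
  rw [map_det, map_sum]
  refine Finset.sum_congr rfl fun t' _ => ?_
  rw [map_det, ← Finset.add_sum_erase _ _ (Finset.mem_univ t')]
  simp only [Matrix.updateCol_self, hM]
  rw [Matrix.det_eq_zero_of_column_eq_zero t' fun _ => by simp, zero_add]
  exact Finset.sum_congr rfl fun t ht => by
    simp only [Matrix.updateCol_ne (Finset.ne_of_mem_erase ht)]

end Derivation

namespace Matrix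

variable {m R : Type*} [Fintype m] [DecidableEq m] [CommRing R]

theorem det_updateCol_eq_sum (N : Matrix m m R) (t : m) (u : m → R) :
    (N.updateCol t u).det = ∑ s, u s * (N.updateCol t (Pi.single s 1)).det := by
  let φ : (m → R) →ₗ[R] R :=
    { toFun := fun u => (N.updateCol t u).det
      map_add' := det_updateCol_add N t
      map_smul' := det_updateCol_smul N t }
  refine (φ.pi_apply_eq_sum_univ u).trans (Finset.sum_congr rfl fun s _ => ?_)
  simp only [φ, LinearMap.coe_mk, AddHom.coe_mk, smul_eq_mul]
  congr 3
  ext s'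
  simp [Pi.single_apply, eq_comm]

theorem det_updateCol_updateCol_eq_sum (N : Matrix m m R) {t t' : m} (h : t ≠ t')
    (u w : m → R) :
    ((N.updateCol t' w).updateCol t u).det = ∑ s, ∑ s', u s * w s' *
      ((N.updateCol t' (Pi.single s' 1)).updateCol t (Pi.single s 1)).det := by
  simp_rw [det_updateCol_eq_sum _ t u, ← updateCol_comm N h, det_updateCol_eq_sum _ t' w,
    Finset.mul_sum, mul_assoc]

theorem det_updateCol_updateCol_self (N : Matrix m m R) {t t' : m} (h : t ≠ t') (u : m → R) :
    ((N.updateCol t' u).updateCol t u).det = 0 :=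
  det_zero_of_column_eq h fun s => by simp [updateCol_apply]

theorem det_updateCol_updateCol_swap (N : Matrix m m R) {t t' : m} (h : t ≠ t')
    (u w : m → R) :
    ((N.updateCol t' w).updateCol t u).det = -((N.updateCol t' u).updateCol t w).det := by
  have h0 := det_updateCol_updateCol_self N h (u + w)
  rw [det_updateCol_add, updateCol_comm _ h.symm, updateCol_comm _ h.symm, det_updateCol_add,
    det_updateCol_add, updateCol_comm _ h, updateCol_comm _ h, updateCol_comm _ h,
    updateCol_comm _ h, det_updateCol_updateCol_self N h, det_updateCol_updateCol_self N h] at h0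
  linear_combination h0

end Matrix

theorem Finset.sum_sum_mul_eq_zero_of_symm_of_alt {ι R : Type*} [Fintype ι] [CommRing R]
    {A B : ι → ι → R} (hA : ∀ s s', A s s' = A s' s) (hB : ∀ s s', B s s' = -B s' s)
    (hB₀ : ∀ s, B s s = 0) : ∑ s, ∑ s', A s s' * B s s' = 0 := by
  rw [← Fintype.sum_prod_type']
  refine Finset.sum_ninvolution Prod.swap (fun x => ?_) (fun x hx hswap => hx ?_)
    (fun _ => Finset.mem_univ _) Prod.swap_swap
  · rw [Prod.fst_swap, Prod.snd_swap, hA, hB]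
    ring
  · obtain ⟨s, s'⟩ := x
    obtain rfl : s' = s := congrArg Prod.fst hswap
    rw [hB₀, mul_zero]

theorem sum_range_ite_mul_ite {α R : Type*} [DecidableEq α] [CommSemiring R]
    (i j : α) (L : ℕ) (p q : α × ℕ) :
    ∑ a ∈ Finset.range (L + 1),
      (if p = (i, a) then (1 : R) else 0) * (if q = (j, L - a) then 1 else 0) =
      if p.1 = i ∧ q.1 = j ∧ p.2 + q.2 = L then 1 else 0 := by
  split_ifs with h
  · obtain ⟨rfl, rfl, hL⟩ := h
    rw [Finset.sum_eq_single_of_mem p.2 (by simp; omega)]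
    · simp [← hL]
    · intro a _ ha
      simp [Prod.ext_iff, Ne.symm ha]
  · refine Finset.sum_eq_zero fun a ha => ?_
    rw [Finset.mem_range] at ha
    simp only [Prod.ext_iff, mul_ite, mul_one, mul_zero]
    split_ifs with hq hp <;> first | rfl | exact absurd ⟨hp.1, hq.1, by omega⟩ h

def hankelSubmatrix (k : Type*) [CommSemiring k] {n : ℕ} {ι : Type*} (r : ι → ℕ)
    (c : ι → Fin n × ℕ) : Matrix ι ι (MvPolynomial (Fin n × ℕ) k) :=
  Matrix.of fun s t => X ((c t).1, r s + (c t).2)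

theorem sum_pderiv_pderiv_det_hankelSubmatrix {k ι : Type*} [CommRing k] [Fintype ι]
    [DecidableEq ι] {n : ℕ} (r : ι → ℕ) (c : ι → Fin n × ℕ) (i j : Fin n) (L : ℕ) :
    ∑ a ∈ Finset.range (L + 1),
      pderiv (i, a) (pderiv (j, L - a) (hankelSubmatrix k r c).det) = 0 := by
  have hlinear : ∀ x y s t, pderiv x (pderiv y (hankelSubmatrix k r c s t)) = 0 := by
    intro x y s t
    rw [hankelSubmatrix, Matrix.of_apply, pderiv_X, Pi.single_apply]
    split_ifs <;> simp
  rw [Finset.sum_congr rfl fun a _ =>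
    Derivation.map_map_det _ _ _ (hlinear (i, a) (j, L - a)), Finset.sum_comm]
  refine Finset.sum_eq_zero fun t' _ => ?_
  rw [Finset.sum_comm]
  refine Finset.sum_eq_zero fun t ht => ?_
  have htt := Finset.ne_of_mem_erase ht
  rw [Finset.sum_congr rfl fun a _ => Matrix.det_updateCol_updateCol_eq_sum _ htt _ _,
    Finset.sum_comm, Finset.sum_congr rfl fun s _ => Finset.sum_comm]
  simp only [← Finset.sum_mul]
  have hcoeff : ∀ s s', ∑ a ∈ Finset.range (L + 1),
      pderiv (i, a) (hankelSubmatrix k r c s t) * pderiv (j, L - a) (hankelSubmatrix k r c s' t') =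
      if (c t).1 = i ∧ (c t').1 = j ∧ r s + (c t).2 + (r s' + (c t').2) = L then 1 else 0 := by
    intro s s'
    simp only [hankelSubmatrix, Matrix.of_apply, pderiv_X, Pi.single_apply]
    exact sum_range_ite_mul_ite i j L _ _
  simp only [hcoeff]
  refine Finset.sum_sum_mul_eq_zero_of_symm_of_alt (fun s s' => ?_)
    (fun s s' => Matrix.det_updateCol_updateCol_swap _ htt _ _)
    (fun s => Matrix.det_updateCol_updateCol_self _ htt _)
  exact if_congr (and_congr_right' (and_congr_right' ⟨fun h => by omega, fun h => by omega⟩))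
    rfl rfl

theorem stmt7_general {k : Type*} [Field k] (n l : ℕ)
    (r : Fin l → ℕ) (c : Fin l → Fin n × ℕ) :
    (Matrix.of fun s t : Fin l =>
        (X ((c t).1, r s + (c t).2) : MvPolynomial (Fin n × ℕ) k)).det ∈ invSys k n :=
  MvPolynomial.mem_invSys_iff.mpr (sum_pderiv_pderiv_det_hankelSubmatrix r c)

/-- every minor of the infinite Hankel matrix (entry `x_j^(i+m)` in row `i`,
column `(j, m)`) belongs to the inverse system of the arc ideal of the double point. -/
theorem stmt7 {k : Type*} [Field k] [CharZero k] (n l : ℕ)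
    (r : Fin l → ℕ) (c : Fin l → Fin n × ℕ)
    (hr : Function.Injective r) (hc : Function.Injective c) :
    (Matrix.of fun s t : Fin l =>
        (X ((c t).1, r s + (c t).2) : MvPolynomial (Fin n × ℕ) k)).det ∈ invSys k n :=
  stmt7_general n l r c
end
end

section
/- Let J be the ideal of k[x_j^(i) : 1 ≤ j ≤ n, i ≥ 0] generated by all h × h minors of the infinite Hankel matrix with entry x_j^(i+m) in row i and block-column (j,m). Then J is a differential ideal: the image of J under the derivation d (with d(x_j^(i)) = x_j^(i+1)) is contained in J. In particular, the derivative of each maximal h × h minor is a k-linear combination of h × h minors. -/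
open MvPolynomial

noncomputable section

/-- The set of `h × h` minors of the infinite Hankel matrix with entry `x_j^(i+m)` in
row `i` and column `(j, m)`. -/
def hankelMinors (k : Type*) [CommRing k] (n h : ℕ) :
    Set (MvPolynomial (Fin n × ℕ) k) :=
  { p | ∃ (r : Fin h → ℕ) (c : Fin h → Fin n × ℕ),
      p = (Matrix.of fun s t : Fin h => X ((c t).1, r s + (c t).2)).det }

/-- The derivation `d` on `k[x_j^(i)]` with `d(x_j^(i)) = x_j^(i+1)`. -/
def derN (k : Type*) [CommRing k] (n : ℕ) :
    Derivation k (MvPolynomial (Fin n × ℕ) k) (MvPolynomial (Fin n × ℕ) k) :=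
  MvPolynomial.mkDerivation k fun v => X (v.1, v.2 + 1)

/-- Leibniz rule for a derivation applied to a finite product. -/
lemma Derivation.map_finset_prod {R A : Type*} [CommRing R] [CommRing A] [Algebra R A]
    (D : Derivation R A A) {ι : Type*} [DecidableEq ι] (s : Finset ι) (f : ι → A) :
    D (∏ i ∈ s, f i) = ∑ i ∈ s, (∏ j ∈ s.erase i, f j) * D (f i) := by
  induction s using Finset.induction_on with
  | empty => simp
  | insert a s ha ih =>
    rw [Finset.prod_insert ha, D.leibniz, smul_eq_mul, smul_eq_mul, ih,
      Finset.sum_insert ha, Finset.erase_insert ha, Finset.mul_sum]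
    rw [add_comm]
    congr 1
    refine Finset.sum_congr rfl fun i hi => ?_
    rw [Finset.erase_insert_of_ne (fun h => ha (by rwa [h])),
      Finset.prod_insert (fun h => ha (Finset.mem_of_mem_erase h)), mul_assoc]

/-- Derivative of a determinant: sum over rows of the determinant with that row
differentiated. -/
lemma Derivation.map_det_s10 {R A : Type*} [CommRing R] [CommRing A] [Algebra R A]
    (D : Derivation R A A) {m : ℕ} (M : Matrix (Fin m) (Fin m) A) :
    D M.det = ∑ s : Fin m, (M.updateRow s fun j => D (M s j)).det := by
  classical
  have key : ∀ σ : Equiv.Perm (Fin m),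
      D (Equiv.Perm.sign σ • ∏ i, M (σ i) i)
        = ∑ s : Fin m, Equiv.Perm.sign σ •
            ∏ i, (M.updateRow s fun j => D (M s j)) (σ i) i := by
    intro σ
    rw [Units.smul_def, zsmul_eq_mul, D.leibniz, Derivation.map_intCast, smul_zero,
      add_zero, smul_eq_mul, ← zsmul_eq_mul, D.map_finset_prod]
    rw [← Equiv.sum_comp σ (fun s => Equiv.Perm.sign σ •
      ∏ i, (M.updateRow s fun j => D (M s j)) (σ i) i), Finset.smul_sum]
    refine Finset.sum_congr rfl fun t _ => ?_
    rw [Units.smul_def]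
    congr 1
    have hprod : ∀ i : Fin m, (M.updateRow (σ t) fun j => D (M (σ t) j)) (σ i) i
        = if i = t then D (M (σ t) i) else M (σ i) i := by
      intro i
      rw [Matrix.updateRow_apply]
      simp [EmbeddingLike.apply_eq_iff_eq]
    calc (∏ j ∈ Finset.univ.erase t, M (σ j) j) * D (M (σ t) t)
        = D (M (σ t) t) * ∏ j ∈ Finset.univ.erase t, M (σ j) j := mul_comm _ _
      _ = ∏ i, (M.updateRow (σ t) fun j => D (M (σ t) j)) (σ i) i := by
          rw [← Finset.mul_prod_erase Finset.univ _ (Finset.mem_univ t)]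
          congr 1
          · rw [hprod t]; simp
          · refine (Finset.prod_congr rfl fun i hi => ?_).symm
            rw [hprod i, if_neg (Finset.ne_of_mem_erase hi)]
  calc D M.det = ∑ σ : Equiv.Perm (Fin m), D (Equiv.Perm.sign σ • ∏ i, M (σ i) i) := by
        rw [Matrix.det_apply, map_sum]
    _ = ∑ σ : Equiv.Perm (Fin m), ∑ s : Fin m, Equiv.Perm.sign σ •
          ∏ i, (M.updateRow s fun j => D (M s j)) (σ i) i :=
        Finset.sum_congr rfl fun σ _ => key σ
    _ = ∑ s : Fin m, ∑ σ : Equiv.Perm (Fin m), Equiv.Perm.sign σ •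
          ∏ i, (M.updateRow s fun j => D (M s j)) (σ i) i := Finset.sum_comm
    _ = _ := Finset.sum_congr rfl fun s _ => (Matrix.det_apply _).symm

lemma derN_X {k : Type*} [CommRing k] (n : ℕ) (v : Fin n × ℕ) :
    derN k n (X v) = X (v.1, v.2 + 1) := by
  simp [derN, mkDerivation_X]

/-- The derivative of a Hankel minor is a sum of Hankel minors. -/
lemma derN_minor {k : Type*} [CommRing k] (n h : ℕ) (r : Fin h → ℕ) (c : Fin h → Fin n × ℕ) :
    derN k n (Matrix.of fun s t : Fin h => X ((c t).1, r s + (c t).2)).det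
      = ∑ s : Fin h,
          (Matrix.of fun s' t : Fin h =>
            X ((c t).1, Function.update r s (r s + 1) s' + (c t).2)).det := by
  rw [(derN k n).map_det_s10]
  refine Finset.sum_congr rfl fun s _ => ?_
  refine congrArg Matrix.det (Matrix.ext fun s' t => ?_)
  rw [Matrix.updateRow_apply]
  by_cases hs : s' = s
  · subst hs
    simp only [if_pos rfl, Matrix.of_apply, derN_X, Function.update_self]
    rw [add_right_comm]
    simp
  · simp [if_neg hs, Function.update_of_ne hs]

/-- the ideal generated by the `h × h` minors of the infinite Hankel matrix
is a differential ideal; in particular, the derivative of each `h × h` minor is a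
`k`-linear combination of `h × h` minors. -/
theorem stmt10 {k : Type*} [Field k] [CharZero k] (n h : ℕ) :
    (∀ f ∈ Ideal.span (hankelMinors k n h),
        derN k n f ∈ Ideal.span (hankelMinors k n h)) ∧
      ∀ p ∈ hankelMinors k n h,
        derN k n p ∈ Submodule.span k (hankelMinors k n h) := by
  have hmin : ∀ p ∈ hankelMinors k n h,
      derN k n p ∈ Submodule.span k (hankelMinors k n h) := by
    rintro p ⟨r, c, rfl⟩
    rw [derN_minor]
    exact Submodule.sum_mem _ fun s _ =>
      Submodule.subset_span ⟨Function.update r s (r s + 1), c, rfl⟩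
  refine ⟨?_, hmin⟩
  intro f hf
  induction hf using Submodule.span_induction with
  | mem p hp =>
      exact Submodule.span_le_restrictScalars k _ _ (hmin p hp)
  | zero => simp
  | add x y hx hy ihx ihy => rw [map_add]; exact Ideal.add_mem _ ihx ihy
  | smul a x hx ihx =>
      rw [smul_eq_mul, Derivation.leibniz, smul_eq_mul, smul_eq_mul]
      exact Ideal.add_mem _ (Ideal.mul_mem_left _ _ ihx) (Ideal.mul_mem_right _ _ hx)
end
end

section
/- Let J ⊂ k[x_1,...,x_n] be an m-primary ideal where m = (x_1,...,x_n), and let m < n. Then the inverse system of the elimination ideal J ∩ k[x_1,...,x_m] equals the set of restrictions {P|_{x_{m+1}=...=x_n=0} : P ∈ J^⊥}. -/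
open MvPolynomial

noncomputable section

namespace Stmt12Aux

variable {k : Type*} [CommSemiring k] {σ : Type*}

/-- multifactorial -/
def fct (d : σ →₀ ℕ) : ℕ := ∏ i ∈ d.support, (d i).factorial

/-- apolarity pairing -/
def pr (f P : MvPolynomial σ k) : k :=
  ∑ d ∈ f.support, f.coeff d * P.coeff d * (fct d : k)

lemma fct_eq_prod {d : σ →₀ ℕ} {S : Finset σ} (h : d.support ⊆ S) :
    fct d = ∏ i ∈ S, (d i).factorial := by
  classical
  refine Finset.prod_subset h ?_
  intro i _ hi
  simp [Finsupp.notMem_support_iff.mp hi]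

lemma nat_fact_aux (a b : ℕ) : (a + b).factorial = b.factorial * (a + b).descFactorial a := by
  rw [add_comm a b, Nat.add_descFactorial_eq_ascFactorial, Nat.factorial_mul_ascFactorial]

lemma fct_add (d e : σ →₀ ℕ) :
    (fct (d + e) : k) = (fct e : k) * ∏ i ∈ d.support, (((d + e) i).descFactorial (d i) : k) := by
  classical
  have h1 : fct (d + e) = ∏ i ∈ d.support ∪ e.support, ((d + e) i).factorial :=
    fct_eq_prod (Finsupp.support_add)
  have h2 : fct e = ∏ i ∈ d.support ∪ e.support, (e i).factorial :=
    fct_eq_prod (Finset.subset_union_right)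
  have h3 : ∏ i ∈ d.support, (((d + e) i).descFactorial (d i) : k)
      = ∏ i ∈ d.support ∪ e.support, (((d + e) i).descFactorial (d i) : k) := by
    refine Finset.prod_subset Finset.subset_union_left ?_
    intro i _ hi
    simp [Finsupp.notMem_support_iff.mp hi]
  rw [h1, h2, h3]
  push_cast
  rw [← Finset.prod_mul_distrib]
  refine Finset.prod_congr rfl ?_
  intro i _
  simp only [Pi.add_apply]
  rw [nat_fact_aux]
  push_cast
  ring

lemma fct_pos (d : σ →₀ ℕ) : 0 < fct d :=
  Finset.prod_pos fun i _ => Nat.factorial_pos _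

lemma fct_ne_zero [CharZero k] (d : σ →₀ ℕ) : (fct d : k) ≠ 0 :=
  Nat.cast_ne_zero.mpr (fct_pos d).ne'

lemma pr_eq_sum_subset {f P : MvPolynomial σ k} {S : Finset (σ →₀ ℕ)} (h : f.support ⊆ S) :
    pr f P = ∑ d ∈ S, f.coeff d * P.coeff d * (fct d : k) := by
  refine Finset.sum_subset h ?_
  intro d _ hd
  simp [MvPolynomial.notMem_support_iff.mp hd]

lemma pr_zero (P : MvPolynomial σ k) : pr 0 P = 0 := by
  simp [pr]

lemma pr_add (f g P : MvPolynomial σ k) : pr (f + g) P = pr f P + pr g P := by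
  classical
  rw [pr_eq_sum_subset (S := f.support ∪ g.support ∪ (f + g).support)
      (Finset.subset_union_right),
    pr_eq_sum_subset (f := f) (S := f.support ∪ g.support ∪ (f + g).support)
      ((Finset.subset_union_left).trans Finset.subset_union_left),
    pr_eq_sum_subset (f := g) (S := f.support ∪ g.support ∪ (f + g).support)
      ((Finset.subset_union_right).trans Finset.subset_union_left),
    ← Finset.sum_add_distrib]
  refine Finset.sum_congr rfl fun d _ => ?_
  rw [MvPolynomial.coeff_add]
  ring

lemma pr_smul (c : k) (f P : MvPolynomial σ k) : pr (c • f) P = c * pr f P := by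
  classical
  rw [pr_eq_sum_subset (S := f.support) (MvPolynomial.support_smul), pr, Finset.mul_sum]
  refine Finset.sum_congr rfl fun d _ => ?_
  rw [MvPolynomial.coeff_smul, smul_eq_mul]
  ring

lemma pr_monomial (d : σ →₀ ℕ) (c : k) (P : MvPolynomial σ k) :
    pr (monomial d c) P = c * P.coeff d * (fct d : k) := by
  classical
  rw [pr_eq_sum_subset (S := {d}) (MvPolynomial.support_monomial_subset), Finset.sum_singleton,
    MvPolynomial.coeff_monomial, if_pos rfl]

lemma pr_sum {ι : Type*} (s : Finset ι) (f : ι → MvPolynomial σ k) (P : MvPolynomial σ k) :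
    pr (∑ i ∈ s, f i) P = ∑ i ∈ s, pr (f i) P := by
  classical
  induction s using Finset.induction with
  | empty => simp [pr_zero]
  | insert _ _ h ih => rw [Finset.sum_insert h, Finset.sum_insert h, pr_add, ih]

lemma coeff_diffApply (f P : MvPolynomial σ k) (e : σ →₀ ℕ) :
    (diffApply f P).coeff e
      = ∑ d ∈ f.support, f.coeff d * P.coeff (d + e)
          * ∏ i ∈ d.support, (((d + e) i).descFactorial (d i) : k) := by
  classical
  rw [diffApply, MvPolynomial.coeff_sum]
  refine Finset.sum_congr rfl fun d _ => ?_
  rw [MvPolynomial.coeff_sum]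
  rw [Finset.sum_eq_single (d + e)]
  · rw [if_pos (self_le_add_right d e)]
    rw [add_tsub_cancel_left, MvPolynomial.coeff_monomial, if_pos rfl]
  · intro b _ hb
    split_ifs with h1
    · rw [MvPolynomial.coeff_monomial]
      rw [if_neg]
      intro hbe
      exact hb (by rw [← hbe, add_tsub_cancel_of_le h1])
    · simp
  · intro hde
    rw [if_pos (self_le_add_right d e), add_tsub_cancel_left, MvPolynomial.coeff_monomial,
      if_pos rfl, MvPolynomial.notMem_support_iff.mp hde]
    ring

lemma pr_monomial_mul (e : σ →₀ ℕ) (f P : MvPolynomial σ k) :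
    pr (monomial e 1 * f) P = (fct e : k) * (diffApply f P).coeff e := by
  classical
  conv_lhs => rw [f.as_sum, Finset.mul_sum]
  rw [pr_sum, coeff_diffApply, Finset.mul_sum]
  refine Finset.sum_congr rfl fun d _ => ?_
  rw [MvPolynomial.monomial_mul, one_mul, pr_monomial, add_comm e d, fct_add]
  ring

lemma pr_eq_coeff_zero (f P : MvPolynomial σ k) : pr f P = (diffApply f P).coeff 0 := by
  have h := pr_monomial_mul (0 : σ →₀ ℕ) f P
  simpa [fct] using h

lemma pr_eq_zero_of_perp {J : Ideal (MvPolynomial σ k)} {P : MvPolynomial σ k}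
    (hP : ∀ f ∈ J, diffApply f P = 0) {f : MvPolynomial σ k} (hf : f ∈ J) : pr f P = 0 := by
  rw [pr_eq_coeff_zero, hP f hf, MvPolynomial.coeff_zero]

lemma perp_of_pr_eq_zero {k : Type*} [Field k] [CharZero k] {σ : Type*}
    {J : Ideal (MvPolynomial σ k)} {P : MvPolynomial σ k}
    (hP : ∀ f ∈ J, pr f P = 0) {f : MvPolynomial σ k} (hf : f ∈ J) : diffApply f P = 0 := by
  ext e
  have h := hP (monomial e 1 * f) (J.mul_mem_left _ hf)
  rw [pr_monomial_mul] at h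
  rw [MvPolynomial.coeff_zero]
  exact (mul_eq_zero.mp h).resolve_left (fct_ne_zero e)

lemma pr_eq_linear (φ : MvPolynomial σ k →ₗ[k] k) (P : MvPolynomial σ k)
    (h : ∀ d, φ (monomial d 1) = P.coeff d * (fct d : k)) (f : MvPolynomial σ k) :
    pr f P = φ f := by
  conv_rhs => rw [f.as_sum]
  rw [map_sum, pr]
  refine Finset.sum_congr rfl fun d _ => ?_
  have : (monomial d) (MvPolynomial.coeff d f) = f.coeff d • monomial d (1 : k) := by
    rw [MvPolynomial.smul_monomial, smul_eq_mul, mul_one]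
  rw [this, map_smul, smul_eq_mul, h d]
  ring

lemma monomial_one_mem_pow {σ : Type*} (N : ℕ) (d : σ →₀ ℕ) (h : N ≤ d.sum fun _ v => v) :
    monomial d (1 : k) ∈ (Ideal.span (Set.range (X : σ → MvPolynomial σ k))) ^ N := by
  classical
  induction N generalizing d with
  | zero => simp [Ideal.one_eq_top]
  | succ N ih =>
    obtain ⟨i, hi⟩ : ∃ i, d i ≠ 0 := by
      by_contra hc
      push_neg at hc
      have : d = 0 := Finsupp.ext fun i => hc i
      rw [this] at h
      simp at h
    have hle : Finsupp.single i 1 ≤ d := by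
      rw [Finsupp.single_le_iff]
      omega
    set d' := d - Finsupp.single i 1 with hd'
    have hsum : d = Finsupp.single i 1 + d' := (add_tsub_cancel_of_le hle).symm
    have hdeg : N ≤ d'.sum fun _ v => v := by
      have h2 : (d.sum fun _ v => v) = 1 + d'.sum fun _ v => v := by
        rw [hsum, Finsupp.sum_add_index' (fun _ => rfl) (fun _ _ _ => rfl),
          Finsupp.sum_single_index rfl]
      omega
    have hmon : monomial d (1 : k) = X i * monomial d' 1 := by
      rw [MvPolynomial.X, MvPolynomial.monomial_mul, one_mul, ← hsum]
    rw [hmon, pow_succ']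
    exact Ideal.mul_mem_mul (Ideal.subset_span ⟨i, rfl⟩) (ih d' hdeg)

section Restrict

variable {n m : ℕ} (hm : m ≤ n)

lemma emb_inj : Function.Injective (Finsupp.mapDomain (M := ℕ) (Fin.castLE hm)) :=
  Finsupp.mapDomain_injective (Fin.castLE_injective hm)

lemma rst_rename (g : MvPolynomial (Fin m) k) :
    aeval (fun i : Fin n => if h : (i : ℕ) < m then (X ⟨i, h⟩ : MvPolynomial (Fin m) k) else 0)
      (rename (Fin.castLE hm) g) = g := by
  rw [MvPolynomial.aeval_rename]
  have : ((fun i : Fin n => if h : (i : ℕ) < m then (X ⟨i, h⟩ : MvPolynomial (Fin m) k) else 0)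
      ∘ Fin.castLE hm) = X := by
    funext j
    simp only [Function.comp_apply, Fin.coe_castLE]
    rw [dif_pos j.isLt]
  rw [this, MvPolynomial.aeval_X_left_apply]

lemma coeff_rst (P : MvPolynomial (Fin n) k) (a : Fin m →₀ ℕ) :
    MvPolynomial.coeff a
      (aeval (fun i : Fin n => if h : (i : ℕ) < m then (X ⟨i, h⟩ : MvPolynomial (Fin m) k) else 0)
        P)
    = MvPolynomial.coeff (Finsupp.mapDomain (Fin.castLE hm) a) P := by
  classical
  set F := (fun i : Fin n => if h : (i : ℕ) < m then (X ⟨i, h⟩ : MvPolynomial (Fin m) k) else 0)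
  have key : ∀ (d : Fin n →₀ ℕ) (c : k),
      MvPolynomial.coeff a (aeval F (monomial d c))
        = if Finsupp.mapDomain (Fin.castLE hm) a = d then c else 0 := by
    intro d c
    by_cases hd : ∀ i ∈ d.support, (i : ℕ) < m
    · have hsub : ↑d.support ⊆ Set.range (Fin.castLE hm) := by
        intro i hi
        exact ⟨⟨(i : ℕ), hd i hi⟩, by ext; simp⟩
      set a₀ := Finsupp.comapDomain (Fin.castLE hm) d ((Fin.castLE_injective hm).injOn)
      have hda : d = Finsupp.mapDomain (Fin.castLE hm) a₀ :=
        (Finsupp.mapDomain_comapDomain _ (Fin.castLE_injective hm) d hsub).symm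
      rw [hda, ← MvPolynomial.rename_monomial, rst_rename, MvPolynomial.coeff_monomial]
      by_cases hc : a₀ = a
      · rw [if_pos hc, if_pos (by rw [hc])]
      · rw [if_neg hc, if_neg (fun hcc => hc ((emb_inj hm hcc).symm))]
    · push_neg at hd
      obtain ⟨i, hi, him⟩ := hd
      have h0 : aeval F (monomial d c) = 0 := by
        have hsplit : monomial d c = monomial (d.erase i) c * X i ^ (d i) := by
          rw [MvPolynomial.X_pow_eq_monomial, MvPolynomial.monomial_mul, mul_one,
            Finsupp.erase_add_single]
        rw [hsplit, map_mul, map_pow]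
        have hX : aeval (R := k) F (X i) = (0 : MvPolynomial (Fin m) k) := by
          rw [MvPolynomial.aeval_X (R := k) F i]
          exact dif_neg (not_lt.mpr him)
        rw [hX, zero_pow (Finsupp.mem_support_iff.mp hi), mul_zero]
      rw [h0, MvPolynomial.coeff_zero, if_neg]
      intro hc
      have : i ∈ (Finsupp.mapDomain (Fin.castLE hm) a).support := by rw [hc]; exact hi
      obtain ⟨j, _, hj⟩ := Finset.mem_image.mp (Finsupp.mapDomain_support this)
      rw [← hj] at him
      exact absurd him (not_le.mpr (by simpa using j.isLt))
  conv_lhs => rw [P.as_sum, map_sum, MvPolynomial.coeff_sum]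
  rw [Finset.sum_congr rfl (fun d _ => key d _), Finset.sum_ite_eq]
  split_ifs with h
  · rfl
  · rw [MvPolynomial.notMem_support_iff.mp h]

lemma fct_emb (a : Fin m →₀ ℕ) : fct (Finsupp.mapDomain (Fin.castLE hm) a) = fct a := by
  classical
  rw [fct, Finsupp.mapDomain_support_of_injective (Fin.castLE_injective hm),
    Finset.prod_image (fun x _ y _ h => (Fin.castLE_injective hm) h)]
  exact Finset.prod_congr rfl fun j _ => by
    rw [Finsupp.mapDomain_apply (Fin.castLE_injective hm)]

lemma pr_rst (g : MvPolynomial (Fin m) k) (P : MvPolynomial (Fin n) k) :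
    pr g (aeval (fun i : Fin n =>
        if h : (i : ℕ) < m then (X ⟨i, h⟩ : MvPolynomial (Fin m) k) else 0) P)
      = pr (rename (Fin.castLE hm) g) P := by
  classical
  rw [pr, pr_eq_sum_subset (f := rename (Fin.castLE hm) g)
      (S := g.support.image (Finsupp.mapDomain (Fin.castLE hm)))
      (by rw [MvPolynomial.support_rename_of_injective (Fin.castLE_injective hm)]),
    Finset.sum_image (fun x _ y _ h => emb_inj hm h)]
  refine Finset.sum_congr rfl fun a _ => ?_
  rw [MvPolynomial.coeff_rename_mapDomain _ (Fin.castLE_injective hm), coeff_rst, fct_emb]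

end Restrict

end Stmt12Aux

open Stmt12Aux in
/-- for an `m`-primary ideal `J ⊆ k[x_1, …, x_n]` and `m < n`, the inverse
system of the elimination ideal `J ∩ k[x_1, …, x_m]` is the set of restrictions
`P|_{x_{m+1} = … = x_n = 0}` of elements `P` of `J^⊥`. -/
theorem stmt12 {k : Type*} [Field k] [CharZero k] (n m : ℕ) (hm : m < n)
    (J : Ideal (MvPolynomial (Fin n) k))
    (hpr : J.IsPrimary)
    (hrad : J.radical = Ideal.span (Set.range (X : Fin n → MvPolynomial (Fin n) k))) :
    { Q : MvPolynomial (Fin m) k |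
        ∀ f ∈ Ideal.comap (rename (Fin.castLE hm.le) :
            MvPolynomial (Fin m) k →ₐ[k] MvPolynomial (Fin n) k).toRingHom J,
          diffApply f Q = 0 }
      = (fun P => aeval (fun i : Fin n =>
            if h : (i : ℕ) < m then (X ⟨i, h⟩ : MvPolynomial (Fin m) k) else 0) P) ''
          { P : MvPolynomial (Fin n) k | ∀ f ∈ J, diffApply f P = 0 } := by
  classical
  ext Q
  simp only [Set.mem_setOf_eq, Set.mem_image]
  constructor
  · intro hQ
    obtain ⟨N, hN⟩ : ∃ N,
        (Ideal.span (Set.range (X : Fin n → MvPolynomial (Fin n) k))) ^ N ≤ J := by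
      obtain ⟨N, hN⟩ := Ideal.exists_radical_pow_le_of_fg J (IsNoetherian.noetherian _)
      exact ⟨N, by rwa [hrad] at hN⟩
    set K := Ideal.comap (rename (Fin.castLE hm.le) :
        MvPolynomial (Fin m) k →ₐ[k] MvPolynomial (Fin n) k).toRingHom J with hK
    have hQK : ∀ g ∈ K, pr g Q = 0 := fun g hg => pr_eq_zero_of_perp hQ hg
    set ℓ : MvPolynomial (Fin m) k →ₗ[k] k :=
      { toFun := fun g => pr g Q
        map_add' := fun f g => pr_add f g Q
        map_smul' := fun c g => pr_smul c g Q } with hℓ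
    set Jk : Submodule k (MvPolynomial (Fin n) k) := Submodule.restrictScalars k J with hJk
    set θ : MvPolynomial (Fin m) k →ₗ[k] MvPolynomial (Fin n) k ⧸ Jk :=
      Jk.mkQ ∘ₗ (rename (Fin.castLE hm.le) :
        MvPolynomial (Fin m) k →ₐ[k] MvPolynomial (Fin n) k).toLinearMap with hθ
    have hker : ∀ g, θ g = 0 ↔ g ∈ K := by
      intro g
      rw [hθ, LinearMap.comp_apply, Submodule.mkQ_apply, Submodule.Quotient.mk_eq_zero]
      simp [hJk, hK, Ideal.mem_comap]
    have hkerle : LinearMap.ker θ ≤ LinearMap.ker ℓ := by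
      intro g hg
      rw [LinearMap.mem_ker] at hg ⊢
      exact hQK g ((hker g).mp hg)
    set ℓ' := (LinearMap.ker θ).liftQ ℓ hkerle with hℓ'
    set ι := (LinearMap.ker θ).liftQ θ le_rfl with hι'
    have hι : Function.Injective ι := by
      rw [← LinearMap.ker_eq_bot]
      exact Submodule.ker_liftQ_eq_bot _ _ _ le_rfl
    set eqv := LinearEquiv.ofInjective ι hι with heqv
    obtain ⟨Φ, hΦ⟩ := LinearMap.exists_extend (ℓ' ∘ₗ eqv.symm.toLinearMap)
    set φ : MvPolynomial (Fin n) k →ₗ[k] k := Φ ∘ₗ Jk.mkQ with hφ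
    have hφJ : ∀ f ∈ J, φ f = 0 := by
      intro f hf
      rw [hφ, LinearMap.comp_apply, Submodule.mkQ_apply,
        (Submodule.Quotient.mk_eq_zero Jk).mpr hf, map_zero]
    have hφρ : ∀ g, φ ((rename (Fin.castLE hm.le)) g) = pr g Q := by
      intro g
      have e0 : φ ((rename (Fin.castLE hm.le)) g)
          = Φ ((LinearMap.range ι).subtype (eqv (Submodule.Quotient.mk g))) := by
        rw [hφ, LinearMap.comp_apply]
        congr 1
      rw [e0, ← LinearMap.comp_apply, hΦ, LinearMap.comp_apply,
        LinearEquiv.coe_coe, LinearEquiv.symm_apply_apply, hℓ', Submodule.liftQ_apply]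
      rfl
    set D : Fin n →₀ ℕ := Finsupp.equivFunOnFinite.symm (fun _ => N) with hD
    set P : MvPolynomial (Fin n) k :=
      ∑ d ∈ Finset.Iic D, monomial d ((fct d : k)⁻¹ * φ (monomial d 1)) with hP
    have hcoeffP : ∀ d, P.coeff d
        = if d ≤ D then (fct d : k)⁻¹ * φ (monomial d 1) else 0 := by
      intro d
      rw [hP, MvPolynomial.coeff_sum,
        Finset.sum_congr rfl (fun e _ => MvPolynomial.coeff_monomial d e _),
        Finset.sum_ite_eq']
      simp [Finset.mem_Iic]
    have hkey : ∀ d, φ (monomial d 1) = P.coeff d * (fct d : k) := by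
      intro d
      rw [hcoeffP d]
      by_cases hdD : d ≤ D
      · rw [if_pos hdD, mul_comm ((fct d : k)⁻¹) _, mul_assoc,
          inv_mul_cancel₀ (fct_ne_zero d), mul_one]
      · rw [if_neg hdD, zero_mul]
        refine hφJ _ (hN (monomial_one_mem_pow N d ?_))
        rw [Finsupp.le_def] at hdD
        push_neg at hdD
        obtain ⟨i, hi⟩ := hdD
        have hDi : D i = N := by simp [hD]
        have hle : d i ≤ d.sum fun _ v => v := by
          refine Finset.single_le_sum (f := fun j => d j) (fun _ _ => Nat.zero_le _) ?_
          rw [Finsupp.mem_support_iff]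
          omega
        omega
    have hPperp : ∀ f ∈ J, diffApply f P = 0 := by
      intro f hf
      refine perp_of_pr_eq_zero (J := J) ?_ hf
      intro f' hf'
      rw [pr_eq_linear φ P hkey f']
      exact hφJ f' hf'
    refine ⟨P, hPperp, ?_⟩
    ext a
    rw [coeff_rst hm.le]
    have h1 := hkey (Finsupp.mapDomain (Fin.castLE hm.le) a)
    have h2 : φ (monomial (Finsupp.mapDomain (Fin.castLE hm.le) a) 1)
        = pr (monomial a (1 : k)) Q := by
      rw [← MvPolynomial.rename_monomial, hφρ]
    rw [pr_monomial, one_mul] at h2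
    rw [fct_emb] at h1
    exact mul_right_cancel₀ (fct_ne_zero a) (h1.symm.trans h2)
  · rintro ⟨P, hP, rfl⟩ f hf
    refine perp_of_pr_eq_zero
      (J := Ideal.comap (rename (Fin.castLE hm.le) :
        MvPolynomial (Fin m) k →ₐ[k] MvPolynomial (Fin n) k).toRingHom J) ?_ hf
    intro g hg
    rw [pr_rst hm.le]
    exact pr_eq_zero_of_perp hP (Ideal.mem_comap.mp hg)
end
end

section
/- Over a field k of characteristic zero, the map P ↦ P|_{y=1} (substituting 1 for the differential variable y and 0 for all its derivatives y', y'', ...) is injective on the k-vector space of differentially homogeneous differential polynomials of a fixed degree d in the differential variables x_1,...,x_n, y. -/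
open MvPolynomial

noncomputable section

/-- Substitution `x_v^(i) ↦ (z·x_v)^(i) = ∑_s C(i,s) z^(s) x_v^(i-s)` expanding the product
with a new differential indeterminate `z` by the Leibniz rule; variables `(Sum.inl v, i)`
are the originals `x_v^(i)` (with `v = some j` being `x_j` and `v = none` being `y`), and
`(Sum.inr (), s)` is `z^(s)`. -/
def leibnizSub {k : Type*} [CommRing k] (n : ℕ) :
    MvPolynomial (Option (Fin n) × ℕ) k →ₐ[k]
      MvPolynomial ((Option (Fin n) ⊕ Unit) × ℕ) k :=
  aeval fun v => ∑ s ∈ Finset.range (v.2 + 1),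
    (v.2.choose s : MvPolynomial ((Option (Fin n) ⊕ Unit) × ℕ) k) *
      X (Sum.inr (), s) * X (Sum.inl v.1, v.2 - s)

/-- A differential polynomial `P` in the differential variables `x_1, …, x_n, y` is
differentially homogeneous of degree `d` if `P(z·x_1, …, z·x_n, z·y) = z^d · P`. -/
def DiffHomogeneous {k : Type*} [CommRing k] (n d : ℕ)
    (P : MvPolynomial (Option (Fin n) × ℕ) k) : Prop :=
  leibnizSub n P =
    X (Sum.inr (), 0) ^ d * rename (fun v : Option (Fin n) × ℕ => (Sum.inl v.1, v.2)) P

/-- The substitution `y ↦ 1`, `y^(i) ↦ 0` for `i ≥ 1` (keeping the `x_j^(i)`). -/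
def setYOne {k : Type*} [CommRing k] (n : ℕ) :
    MvPolynomial (Option (Fin n) × ℕ) k →ₐ[k] MvPolynomial (Fin n × ℕ) k :=
  aeval fun v : Option (Fin n) × ℕ =>
    match v.1 with
    | Option.some j => X (j, v.2)
    | Option.none => if v.2 = 0 then 1 else 0

section Stmt14Aux

variable {k : Type*} [Field k] {n : ℕ}

private def ι (k : Type*) [Field k] (n : ℕ) :
    MvPolynomial (Option (Fin n) × ℕ) k →ₐ[k]
      FractionRing (MvPolynomial (Option (Fin n) × ℕ) k) :=
  IsScalarTower.toAlgHom k _ _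

private def mfun (k : Type*) [Field k] (n : ℕ) (j : Fin n) :
    ℕ → FractionRing (MvPolynomial (Option (Fin n) × ℕ) k)
  | i => (ι k n (X (some j, i)) - ∑ t ∈ (Finset.range i).attach,
      (i.choose t.1 : FractionRing (MvPolynomial (Option (Fin n) × ℕ) k)) *
        ι k n (X (none, i - t.1)) * mfun k n j t.1) / ι k n (X (none, 0))
termination_by i => i
decreasing_by exact Finset.mem_range.mp t.2

private lemma yne : (ι k n (X (none, 0))) ≠ 0 := by
  intro h
  have hinj := IsFractionRing.injective (MvPolynomial (Option (Fin n) × ℕ) k)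
    (FractionRing (MvPolynomial (Option (Fin n) × ℕ) k))
  have h0 : (X (none, 0) : MvPolynomial (Option (Fin n) × ℕ) k) = 0 := by
    apply hinj; rw [map_zero]; exact h
  exact X_ne_zero _ h0

private lemma keyT (j : Fin n) (i : ℕ) :
    ∑ t ∈ Finset.range (i + 1),
      (i.choose t : FractionRing (MvPolynomial (Option (Fin n) × ℕ) k)) *
        ι k n (X (none, i - t)) * mfun k n j t = ι k n (X (some j, i)) := by
  rw [Finset.sum_range_succ, mfun, Nat.choose_self, Nat.cast_one, one_mul, Nat.sub_self,
    mul_comm, div_mul_cancel₀ _ yne]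
  rw [← Finset.sum_attach (Finset.range i)
    (fun t => (i.choose t : FractionRing (MvPolynomial (Option (Fin n) × ℕ) k)) *
      ι k n (X (none, i - t)) * mfun k n j t)]
  ring

private lemma keyX (j : Fin n) (i : ℕ) :
    ∑ s ∈ Finset.range (i + 1),
      (i.choose s : FractionRing (MvPolynomial (Option (Fin n) × ℕ) k)) *
        ι k n (X (none, s)) * mfun k n j (i - s) = ι k n (X (some j, i)) := by
  rw [← keyT j i, ← Finset.sum_range_reflect]
  apply Finset.sum_congr rfl
  intro s hs
  have hsi : s ≤ i := Nat.lt_succ_iff.mp (Finset.mem_range.mp hs)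
  have h1 : i + 1 - 1 - s = i - s := by omega
  have h2 : i - (i - s) = s := by omega
  rw [h1, Nat.choose_symm hsi, h2]

private def gfun (k : Type*) [Field k] (n : ℕ) :
    (Option (Fin n) ⊕ Unit) × ℕ → FractionRing (MvPolynomial (Option (Fin n) × ℕ) k)
  | (Sum.inl (some j), i) => mfun k n j i
  | (Sum.inl none, i) => if i = 0 then 1 else 0
  | (Sum.inr _, i) => ι k n (X (none, i))

private lemma comp_leibniz :
    (aeval (gfun k n)).comp (leibnizSub n) = ι k n := by
  apply MvPolynomial.algHom_ext
  rintro ⟨v1, i⟩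
  rw [AlgHom.comp_apply, leibnizSub, aeval_X, map_sum]
  simp only [map_mul, aeval_X, map_natCast]
  match v1 with
  | some j => exact keyX j i
  | none =>
    rw [Finset.sum_range_succ]
    have hz : ∀ s ∈ Finset.range i,
        (i.choose s : FractionRing (MvPolynomial (Option (Fin n) × ℕ) k)) *
          gfun k n (Sum.inr (), s) * gfun k n (Sum.inl none, i - s) = 0 := by
      intro s hs
      have : i - s ≠ 0 := by have := Finset.mem_range.mp hs; omega
      simp [gfun, this]
    rw [Finset.sum_eq_zero hz, zero_add]
    simp [gfun]

private lemma comp_setYOne :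
    ((aeval (fun p : Fin n × ℕ => mfun k n p.1 p.2) :
        MvPolynomial (Fin n × ℕ) k →ₐ[k] _)).comp (setYOne n) =
      aeval (fun v : Option (Fin n) × ℕ => gfun k n (Sum.inl v.1, v.2)) := by
  apply MvPolynomial.algHom_ext
  rintro ⟨v1, i⟩
  rw [AlgHom.comp_apply, setYOne, aeval_X, aeval_X]
  match v1 with
  | some j => simp [gfun]
  | none => by_cases hi : i = 0 <;> simp [gfun, hi]

private lemma recover (d : ℕ) (P : MvPolynomial (Option (Fin n) × ℕ) k)
    (hP : DiffHomogeneous n d P) :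
    ι k n P = ι k n (X (none, 0)) ^ d *
      (aeval (fun p : Fin n × ℕ => mfun k n p.1 p.2) :
        MvPolynomial (Fin n × ℕ) k →ₐ[k] _) (setYOne n P) := by
  have e := congrArg (aeval (gfun k n)) hP
  rw [← AlgHom.comp_apply, comp_leibniz] at e
  rw [map_mul, map_pow, aeval_X, aeval_rename] at e
  have : (gfun k n) ∘ (fun v : Option (Fin n) × ℕ => (Sum.inl v.1, v.2)) =
      fun v : Option (Fin n) × ℕ => gfun k n (Sum.inl v.1, v.2) := rfl
  rw [this, ← comp_setYOne, AlgHom.comp_apply] at e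
  simpa [gfun] using e

end Stmt14Aux

/-- the map `P ↦ P|_{y=1}` is injective on the space of differentially
homogeneous differential polynomials of a fixed degree `d`. -/
theorem stmt14 {k : Type*} [Field k] [CharZero k] (n d : ℕ)
    (P Q : MvPolynomial (Option (Fin n) × ℕ) k)
    (hP : DiffHomogeneous n d P) (hQ : DiffHomogeneous n d Q)
    (h : setYOne n P = setYOne n Q) : P = Q := by
  have e := (recover d P hP).trans (by rw [h, ← recover d Q hQ])
  exact IsFractionRing.injective (MvPolynomial (Option (Fin n) × ℕ) k)
    (FractionRing (MvPolynomial (Option (Fin n) × ℕ) k)) e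
end
end

section
/- Let S_{n+1,h} be the (h+1) × (n+1)(h+1) concatenation of the matrices S_h(x_1),...,S_h(x_{n+1}), where S_h(x_j) is upper triangular Toeplitz with (r,c) entry x_j^(c−r)/(c−r)!. After substituting x_{n+1} = 1 (i.e., x_{n+1} ↦ 1 and x_{n+1}^(i) ↦ 0 for i ≥ 1), the k-vector space spanned by the maximal (h+1)×(h+1) minors of S_{n+1,h}|_{x_{n+1}=1} equals the k-vector space spanned by all minors (of all sizes, including the empty minor 1) of S_{n,h}. -/
open MvPolynomial

noncomputable section

/-- The matrix `T_{n,h}`: horizontal concatenation of the upper-triangular Toeplitz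
matrices `T_h(x_j)` with `(r, c)` entry `x_j^(h-c+r)` for `c ≥ r`. -/
def Tmat (k : Type*) [CommSemiring k] (n h : ℕ) :
    Matrix (Fin (h + 1)) (Fin n × Fin (h + 1)) (MvPolynomial (Fin n × ℕ) k) :=
  Matrix.of fun r jc =>
    if (r : ℕ) ≤ (jc.2 : ℕ) then X (jc.1, h - ((jc.2 : ℕ) - (r : ℕ))) else 0

/-- The matrix `S_{n,h}`: horizontal concatenation of the upper-triangular Toeplitz
matrices `S_h(x_j)` with `(r, c)` entry `x_j^(c-r)/(c-r)!` for `c ≥ r`. -/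
def Smat (k : Type*) [Field k] (n h : ℕ) :
    Matrix (Fin (h + 1)) (Fin n × Fin (h + 1)) (MvPolynomial (Fin n × ℕ) k) :=
  Matrix.of fun r jc =>
    if (r : ℕ) ≤ (jc.2 : ℕ) then
      C (((((jc.2 : ℕ) - (r : ℕ)).factorial : k))⁻¹) * X (jc.1, (jc.2 : ℕ) - (r : ℕ))
    else 0

/-- The set of all minors (of all sizes, including the empty minor `1`) of a matrix. -/
def minorsSet {ι κ R : Type*} [CommRing R] (M : Matrix ι κ R) : Set R :=
  { p | ∃ (m : ℕ) (ρ : Fin m → ι) (γ : Fin m → κ),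
      p = (Matrix.of fun s t : Fin m => M (ρ s) (γ t)).det }

/-- The matrix `S_{n+1,h}` after substituting `x_{n+1} = 1`: the first `n` blocks are the
`S_h(x_j)` and the last block is the identity matrix. -/
def SmatSub (k : Type*) [Field k] (n h : ℕ) :
    Matrix (Fin (h + 1)) (Fin (n + 1) × Fin (h + 1)) (MvPolynomial (Fin n × ℕ) k) :=
  Matrix.of fun r jc =>
    if hj : (jc.1 : ℕ) < n then
      (if (r : ℕ) ≤ (jc.2 : ℕ) then
        C (((((jc.2 : ℕ) - (r : ℕ)).factorial : k))⁻¹) *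
          X ((⟨(jc.1 : ℕ), hj⟩ : Fin n), (jc.2 : ℕ) - (r : ℕ))
      else 0)
    else (if r = jc.2 then 1 else 0)

/-- The set of maximal `(h+1) × (h+1)` minors of a matrix with `h+1` rows. -/
def maxMinorsSet {κ R : Type*} [CommRing R] {h : ℕ}
    (M : Matrix (Fin (h + 1)) κ R) : Set R :=
  { p | ∃ γ : Fin (h + 1) → κ,
      p = (Matrix.of fun s t : Fin (h + 1) => M s (γ t)).det }

set_option maxHeartbeats 1000000

lemma core {R : Type*} [CommRing R] {ι α β : Type*} [Fintype ι] [DecidableEq ι]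
    [Fintype α] [DecidableEq α] [Fintype β] [DecidableEq β]
    (er ec : α ⊕ β ≃ ι) (M : Matrix ι ι R)
    (h12 : ∀ a b, M (er (Sum.inl a)) (ec (Sum.inr b)) = 0)
    (h22 : ∀ b b', M (er (Sum.inr b)) (ec (Sum.inr b')) = if b = b' then 1 else 0) :
    ∃ s : ℤˣ, M.det = (s : ℤ) • (Matrix.of fun a a' =>
      M (er (Sum.inl a)) (ec (Sum.inl a'))).det := by
  classical
  set A : Matrix α α R := Matrix.of fun a a' => M (er (Sum.inl a)) (ec (Sum.inl a')) with hA
  set Cm : Matrix β α R := Matrix.of fun b a' => M (er (Sum.inr b)) (ec (Sum.inl a')) with hC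
  have hN : M.submatrix er ec = Matrix.fromBlocks A 0 Cm 1 := by
    ext i j
    cases i <;> cases j <;>
      simp [Matrix.fromBlocks, h12, h22, Matrix.one_apply, hA, hC, Matrix.submatrix]
  have hdetN : (M.submatrix er ec).det = A.det := by
    rw [hN, Matrix.det_fromBlocks_zero₁₂, Matrix.det_one, mul_one]
  set σ : Equiv.Perm (α ⊕ β) := ec.trans er.symm with hσ
  have hsub : M.submatrix er ec = (M.submatrix er er).submatrix id σ := by
    ext i j
    simp [Matrix.submatrix, hσ]
  have hperm : (M.submatrix er ec).det = Equiv.Perm.sign σ * M.det := by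
    rw [hsub, Matrix.det_permute', Matrix.det_submatrix_equiv_self]
  refine ⟨Equiv.Perm.sign σ, ?_⟩
  have h2 : ((Equiv.Perm.sign σ : ℤ) : R) * ((Equiv.Perm.sign σ : ℤ) : R) = 1 := by
    rcases Int.units_eq_one_or (Equiv.Perm.sign σ) with h | h <;> simp [h]
  have := hperm.symm.trans hdetN
  rw [← this, zsmul_eq_mul, ← mul_assoc, h2, one_mul]

lemma dir1 {k : Type*} [Field k] [CharZero k] (n h : ℕ) :
    maxMinorsSet (SmatSub k n h) ⊆ Submodule.span k (minorsSet (Smat k n h)) := by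
  classical
  rintro p ⟨γ, rfl⟩
  set M : Matrix (Fin (h+1)) (Fin (h+1)) (MvPolynomial (Fin n × ℕ) k) :=
    Matrix.of fun s t => SmatSub k n h s (γ t) with hM
  set P : Fin (h+1) → Prop := fun t => ((γ t).1 : ℕ) < n with hP
  by_cases hinj : Function.Injective (fun t : {t // ¬ P t} => (γ (t : Fin (h+1))).2)
  · set f : {t // ¬ P t} → Fin (h+1) := fun t => (γ (t : Fin (h+1))).2 with hf
    set m := Fintype.card {t // P t} with hm
    have hrange : Fintype.card {x : Fin (h+1) // x ∈ Set.range f}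
        = Fintype.card {t // ¬ P t} :=
      Fintype.card_congr (Equiv.ofInjective f hinj).symm
    have hPcard : Fintype.card {t // ¬ P t} = (h+1) - m := by
      rw [Fintype.card_subtype_compl, Fintype.card_fin]
    have hmle : m ≤ h + 1 := by
      rw [hm]
      simpa using Fintype.card_subtype_le P
    have hcompl : Fintype.card {x : Fin (h+1) // x ∉ Set.range f} = m := by
      rw [Fintype.card_subtype_compl, Fintype.card_fin, hrange, hPcard]
      omega
    set eM : Fin m ≃ {x : Fin (h+1) // x ∉ Set.range f} :=
      (Fintype.equivFinOfCardEq hcompl).symm with heM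
    set e₁ : Fin m ≃ {t // P t} := (Fintype.equivFin {t // P t}).symm with he₁
    set Erow : Fin m ⊕ {t // ¬ P t} ≃ Fin (h+1) :=
      (Equiv.sumCongr eM (Equiv.ofInjective f hinj)).trans
        ((Equiv.sumComm _ _).trans (Equiv.sumCompl (· ∈ Set.range f))) with hErow
    set Ecol : Fin m ⊕ {t // ¬ P t} ≃ Fin (h+1) :=
      (Equiv.sumCongr e₁ (Equiv.refl _)).trans (Equiv.sumCompl P) with hEcol
    have hEr_inl : ∀ a, Erow (Sum.inl a) = (eM a : Fin (h+1)) := by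
      intro a
      simp [hErow, Equiv.sumCompl_apply_inl, Equiv.sumCompl_apply_inr]
    have hEr_inr : ∀ b, Erow (Sum.inr b) = f b := by
      intro b
      simp [hErow, Equiv.sumCompl_apply_inl, Equiv.sumCompl_apply_inr]
    have hEc_inl : ∀ a, Ecol (Sum.inl a) = (e₁ a : Fin (h+1)) := by
      intro a
      simp [hEcol, Equiv.sumCompl_apply_inl]
    have hEc_inr : ∀ b : {t // ¬ P t}, Ecol (Sum.inr b) = (b : Fin (h+1)) := by
      intro b
      simp [hEcol, Equiv.sumCompl_apply_inr]
    have h12 : ∀ a b, M (Erow (Sum.inl a)) (Ecol (Sum.inr b)) = 0 := by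
      intro a b
      rw [hM]
      simp only [Matrix.of_apply]
      rw [hEr_inl, hEc_inr, SmatSub, Matrix.of_apply, dif_neg b.2, if_neg]
      intro hc
      exact (eM a).2 ⟨b, hc.symm⟩
    have h22 : ∀ b b', M (Erow (Sum.inr b)) (Ecol (Sum.inr b')) =
        if b = b' then 1 else 0 := by
      intro b b'
      rw [hM]
      simp only [Matrix.of_apply]
      rw [hEr_inr, hEc_inr, SmatSub, Matrix.of_apply, dif_neg b'.2]
      by_cases hbb : b = b'
      · subst hbb; simp [hf]
      · rw [if_neg hbb, if_neg]
        intro hc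
        exact hbb (hinj hc)
    obtain ⟨s, hs⟩ := core Erow Ecol M h12 h22
    have hA : (Matrix.of fun a a' : Fin m =>
        M (Erow (Sum.inl a)) (Ecol (Sum.inl a'))) = Matrix.of fun a a' : Fin m =>
          Smat k n h ((eM a : Fin (h+1)))
            ((⟨((γ (e₁ a' : Fin (h+1))).1 : ℕ), (e₁ a').2⟩ : Fin n),
              (γ (e₁ a' : Fin (h+1))).2) := by
      refine Matrix.ext fun a a' => ?_
      rw [Matrix.of_apply, Matrix.of_apply, hM]
      simp only [Matrix.of_apply]
      rw [hEr_inl, hEc_inl, SmatSub, Smat, Matrix.of_apply, Matrix.of_apply,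
        dif_pos (e₁ a').2]
    have hmem : (Matrix.of fun a a' : Fin m =>
        M (Erow (Sum.inl a)) (Ecol (Sum.inl a'))).det ∈ minorsSet (Smat k n h) := by
      rw [hA]
      exact ⟨m, _, _, rfl⟩
    rw [hs]
    exact zsmul_mem (Submodule.subset_span hmem) _
  · rw [Function.not_injective_iff] at hinj
    obtain ⟨t, t', heq, hne⟩ := hinj
    have hz : M.det = 0 := by
      apply Matrix.det_zero_of_column_eq (i := (t : Fin (h+1))) (j := (t' : Fin (h+1)))
      · exact fun hc => hne (Subtype.ext hc)
      · intro s
        rw [hM]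
        simp only [Matrix.of_apply]
        rw [SmatSub, Matrix.of_apply, Matrix.of_apply, dif_neg t.2, dif_neg t'.2]
        have heq' : (γ (t : Fin (h+1))).2 = (γ (t' : Fin (h+1))).2 := heq
        rw [heq']
    rw [hz]
    exact Submodule.zero_mem _

lemma dir2 {k : Type*} [Field k] [CharZero k] (n h : ℕ) :
    minorsSet (Smat k n h) ⊆ Submodule.span k (maxMinorsSet (SmatSub k n h)) := by
  classical
  rintro p ⟨m, ρ, γm, rfl⟩
  by_cases hinj : Function.Injective ρ
  · have hmle : m ≤ h + 1 := by simpa using Fintype.card_le_of_injective ρ hinj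
    have hrange : Fintype.card {x : Fin (h+1) // x ∈ Set.range ρ} = m := by
      rw [Fintype.card_congr (Equiv.ofInjective ρ hinj).symm, Fintype.card_fin]
    have hcompl : Fintype.card {x : Fin (h+1) // x ∉ Set.range ρ} = (h+1) - m := by
      rw [Fintype.card_subtype_compl, Fintype.card_fin, hrange]
    set eC : Fin (h+1-m) ≃ {x : Fin (h+1) // x ∉ Set.range ρ} :=
      (Fintype.equivFinOfCardEq hcompl).symm with heC
    set Erow : Fin m ⊕ Fin (h+1-m) ≃ Fin (h+1) :=
      (Equiv.sumCongr (Equiv.ofInjective ρ hinj) eC).trans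
        (Equiv.sumCompl (· ∈ Set.range ρ)) with hErow
    set Ecol : Fin m ⊕ Fin (h+1-m) ≃ Fin (h+1) :=
      finSumFinEquiv.trans (finCongr (by omega)) with hEcol
    set γfull : Fin (h+1) → Fin (n+1) × Fin (h+1) := fun t =>
      Sum.elim (fun a => (Fin.castSucc (γm a).1, (γm a).2))
        (fun b => (Fin.last n, (eC b : Fin (h+1)))) (Ecol.symm t) with hγfull
    set M : Matrix (Fin (h+1)) (Fin (h+1)) (MvPolynomial (Fin n × ℕ) k) :=
      Matrix.of fun s t => SmatSub k n h s (γfull t) with hM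
    have hEr_inl : ∀ a, Erow (Sum.inl a) = ρ a := by
      intro a
      simp [hErow, Equiv.sumCompl_apply_inl]
    have hEr_inr : ∀ b, Erow (Sum.inr b) = (eC b : Fin (h+1)) := by
      intro b
      simp [hErow, Equiv.sumCompl_apply_inr]
    have hcol_inl : ∀ a, γfull (Ecol (Sum.inl a))
        = (Fin.castSucc (γm a).1, (γm a).2) := by
      intro a
      rw [hγfull]
      simp
    have hcol_inr : ∀ b, γfull (Ecol (Sum.inr b))
        = (Fin.last n, (eC b : Fin (h+1))) := by
      intro b
      rw [hγfull]
      simp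
    have hlast : ¬ ((Fin.last n : ℕ) < n) := by simp
    have h12 : ∀ a b, M (Erow (Sum.inl a)) (Ecol (Sum.inr b)) = 0 := by
      intro a b
      rw [hM]
      simp only [Matrix.of_apply]
      rw [hcol_inr, hEr_inl, SmatSub, Matrix.of_apply, dif_neg hlast, if_neg]
      intro hc
      exact (eC b).2 ⟨a, hc⟩
    have h22 : ∀ b b', M (Erow (Sum.inr b)) (Ecol (Sum.inr b')) =
        if b = b' then 1 else 0 := by
      intro b b'
      rw [hM]
      simp only [Matrix.of_apply]
      rw [hcol_inr, hEr_inr, SmatSub, Matrix.of_apply, dif_neg hlast]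
      by_cases hbb : b = b'
      · subst hbb; simp
      · rw [if_neg hbb, if_neg]
        intro hc
        exact hbb (eC.injective (Subtype.ext hc))
    obtain ⟨s, hs⟩ := core Erow Ecol M h12 h22
    have hA : (Matrix.of fun a a' : Fin m =>
        M (Erow (Sum.inl a)) (Ecol (Sum.inl a')))
        = Matrix.of fun a a' : Fin m => Smat k n h (ρ a) (γm a') := by
      refine Matrix.ext fun a a' => ?_
      rw [Matrix.of_apply, Matrix.of_apply, hM]
      simp only [Matrix.of_apply]
      have hj : ((Fin.castSucc (γm a').1 : ℕ) < n) := (γm a').1.isLt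
      rw [hEr_inl, hcol_inl, SmatSub, Smat, Matrix.of_apply, Matrix.of_apply,
        dif_pos hj]
      have hfin : (⟨((Fin.castSucc (γm a').1 : Fin (n+1)) : ℕ), hj⟩ : Fin n)
          = (γm a').1 := by
        apply Fin.ext
        simp
      rw [hfin]
    have key : (Matrix.of fun a a' : Fin m =>
        M (Erow (Sum.inl a)) (Ecol (Sum.inl a'))).det = (s : ℤ) • M.det := by
      rw [hs, smul_smul, ← Units.val_mul, Int.units_mul_self, Units.val_one, one_smul]
    have hmem : M.det ∈ maxMinorsSet (SmatSub k n h) := ⟨γfull, rfl⟩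
    rw [← hA, key]
    exact zsmul_mem (Submodule.subset_span hmem) _
  · rw [Function.not_injective_iff] at hinj
    obtain ⟨a, a', heq, hne⟩ := hinj
    have hz : (Matrix.of fun s t : Fin m => Smat k n h (ρ s) (γm t)).det = 0 := by
      apply Matrix.det_zero_of_row_eq hne
      funext t
      simp only [Matrix.of_apply]
      rw [heq]
    rw [hz]
    exact Submodule.zero_mem _


/-- the span of the maximal minors of `S_{n+1,h}|_{x_{n+1}=1}` equals the
span of all minors (of all sizes, including the empty minor `1`) of `S_{n,h}`. -/
theorem stmt16 {k : Type*} [Field k] [CharZero k] (n h : ℕ) :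
    Submodule.span k (maxMinorsSet (SmatSub k n h))
      = Submodule.span k (minorsSet (Smat k n h)) :=
  le_antisymm (Submodule.span_le.2 (dir1 n h)) (Submodule.span_le.2 (dir2 n h))
end
end

section
/- For n = 1 and h = 1: the quotient k[x, x'] / (I_1^arc ∩ k[x, x']) has k-dimension 4, and the elimination ideal I_1^arc ∩ k[x,x'] equals (x², x x', (x')³). -/
open MvPolynomial

noncomputable section

lemma pair_ne_zero (s t : ℕ) : Finsupp.single s 1 + Finsupp.single t 1 ≠ (0 : ℕ →₀ ℕ) := by
  intro h
  have hs := DFunLike.congr_fun h s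
  simp [Finsupp.single_apply] at hs

lemma pair_ne_single (s t i : ℕ) :
    Finsupp.single s 1 + Finsupp.single t 1 ≠ (Finsupp.single i 1 : ℕ →₀ ℕ) := by
  intro h
  have hs := DFunLike.congr_fun h s
  have ht := DFunLike.congr_fun h t
  have hi := DFunLike.congr_fun h i
  simp [Finsupp.single_apply] at hs ht hi
  split_ifs at hs ht hi <;> omega

lemma pair_eq_pair_iff (s t a b : ℕ) :
    Finsupp.single s 1 + Finsupp.single t 1 = Finsupp.single a 1 + Finsupp.single b 1
      ↔ (s = a ∧ t = b) ∨ (s = b ∧ t = a) := by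
  constructor
  · intro h
    have ha := DFunLike.congr_fun h a
    have hsa : s = a ∨ t = a := by
      by_contra hc
      push_neg at hc
      simp [Finsupp.single_apply, hc.1, hc.2] at ha
      split_ifs at ha <;> omega
    rcases hsa with rfl | rfl
    · left
      refine ⟨rfl, ?_⟩
      have := add_left_cancel h
      rwa [Finsupp.single_left_inj one_ne_zero] at this
    · right
      refine ⟨?_, rfl⟩
      rw [add_comm (Finsupp.single t 1) (Finsupp.single b 1)] at h
      have := add_right_cancel h
      rwa [Finsupp.single_left_inj one_ne_zero] at this
  · rintro (⟨rfl, rfl⟩ | ⟨rfl, rfl⟩)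
    · rfl
    · exact add_comm _ _

section
variable {k : Type*} [Field k] [CharZero k]

def Phi (Q : MvPolynomial ℕ k) : Prop :=
  coeff 0 Q = 0 ∧ (∀ i, coeff (Finsupp.single i 1) Q = 0) ∧
    2 * coeff (Finsupp.single 1 2) Q = coeff (Finsupp.single 0 1 + Finsupp.single 2 1) Q

lemma sub_single_self (a b : ℕ) (hb : 1 ≤ b) :
    (Finsupp.single a b - Finsupp.single a 1 : ℕ →₀ ℕ) = Finsupp.single a (b - 1) := by
  ext n
  simp [Finsupp.single_apply]

lemma phi_X_mul (Q : MvPolynomial ℕ k) (hQ : Phi Q) (i : ℕ) : Phi (Q * X i) := by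
  obtain ⟨h0, h1, h2⟩ := hQ
  refine ⟨?_, ?_, ?_⟩
  · simp [coeff_mul_X']
  · intro j
    rw [coeff_mul_X']
    split_ifs with h
    · simp only [Finsupp.mem_support_iff, Finsupp.single_apply] at h
      split_ifs at h with hij
      · subst hij
        simpa using h0
      · simp at h
    · rfl
  · rw [coeff_mul_X', coeff_mul_X']
    split_ifs with ha hb hb
    · -- i ∈ supp (single 1 2) : i = 1 ; and i ∈ supp (single 0 1 + single 2 1): contradiction
      exfalso
      simp only [Finsupp.mem_support_iff, Finsupp.single_apply, Finsupp.add_apply] at ha hb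
      split_ifs at ha hb <;> omega
    · simp only [Finsupp.mem_support_iff, Finsupp.single_apply] at ha
      split_ifs at ha with h1'
      · subst h1'
        rw [sub_single_self 1 2 (by norm_num)]
        simpa using h1 1
      · simp at ha
    · simp only [Finsupp.mem_support_iff, Finsupp.single_apply, Finsupp.add_apply] at hb
      have hi : i = 0 ∨ i = 2 := by split_ifs at hb <;> omega
      rcases hi with rfl | rfl
      · have : (Finsupp.single 0 1 + Finsupp.single 2 1 - Finsupp.single 0 1 : ℕ →₀ ℕ)
            = Finsupp.single 2 1 := by
          ext n; simp [Finsupp.single_apply]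
        rw [this, h1 2, mul_zero]
      · have : (Finsupp.single 0 1 + Finsupp.single 2 1 - Finsupp.single 2 1 : ℕ →₀ ℕ)
            = Finsupp.single 0 1 := by
          ext n; simp [Finsupp.single_apply]
        rw [this, h1 0, mul_zero]
    · simp
end

section
variable {k : Type*} [Field k] [CharZero k]

lemma X_mul_X_eq (s t : ℕ) :
    (X s * X t : MvPolynomial ℕ k) = monomial (Finsupp.single s 1 + Finsupp.single t 1) 1 := by
  rw [X, X, monomial_mul, one_mul]

lemma phi_gen (l : ℕ) :
    Phi (∑ s ∈ Finset.range (l + 1), X s * X (l - s) : MvPolynomial ℕ k) := by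
  refine ⟨?_, ?_, ?_⟩
  · rw [coeff_sum]
    apply Finset.sum_eq_zero
    intro s _
    rw [X_mul_X_eq, coeff_monomial, if_neg (pair_ne_zero _ _)]
  · intro i
    rw [coeff_sum]
    apply Finset.sum_eq_zero
    intro s _
    rw [X_mul_X_eq, coeff_monomial, if_neg (pair_ne_single _ _ _)]
  · rw [coeff_sum, coeff_sum]
    simp only [X_mul_X_eq, coeff_monomial]
    have e12 : (Finsupp.single 1 2 : ℕ →₀ ℕ) = Finsupp.single 1 1 + Finsupp.single 1 1 := by
      rw [← Finsupp.single_add]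
    simp only [e12, pair_eq_pair_iff]
    by_cases hl : l = 2
    · subst hl
      rw [Finset.sum_range_succ, Finset.sum_range_succ, Finset.sum_range_succ,
        Finset.sum_range_succ, Finset.sum_range_succ, Finset.sum_range_succ,
        Finset.sum_range_zero, Finset.sum_range_zero]
      norm_num
    · rw [Finset.sum_eq_zero, Finset.sum_eq_zero, mul_zero]
      · intro s hs
        simp only [Finset.mem_range] at hs
        rw [if_neg]
        rintro (⟨h1, h2⟩ | ⟨h1, h2⟩) <;> omega
      · intro s hs
        simp only [Finset.mem_range] at hs
        rw [if_neg]
        rintro (⟨h1, h2⟩ | ⟨h1, h2⟩) <;> omega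
end

section
variable {k : Type*} [Field k] [CharZero k]

lemma phi_zero : Phi (0 : MvPolynomial ℕ k) := by
  refine ⟨?_, fun i => ?_, ?_⟩ <;> simp

lemma phi_add {P Q : MvPolynomial ℕ k} (hP : Phi P) (hQ : Phi Q) : Phi (P + Q) := by
  obtain ⟨p0, p1, p2⟩ := hP
  obtain ⟨q0, q1, q2⟩ := hQ
  refine ⟨?_, fun i => ?_, ?_⟩ <;> simp [coeff_add, p0, q0, p1, q1]
  rw [mul_add, p2, q2]

lemma phi_mul (r : MvPolynomial ℕ k) {Q : MvPolynomial ℕ k} (hQ : Phi Q) : Phi (r * Q) := by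
  induction r using MvPolynomial.induction_on with
  | C c =>
    obtain ⟨q0, q1, q2⟩ := hQ
    refine ⟨?_, fun i => ?_, ?_⟩ <;> simp [coeff_C_mul, q0, q1]
    rw [mul_left_comm, q2]
  | add p q hp hq =>
    rw [add_mul]
    exact phi_add hp hq
  | mul_X p n hp =>
    rw [mul_right_comm]
    exact phi_X_mul _ hp n

lemma phi_mem {P : MvPolynomial ℕ k} (hP : P ∈ arcIdeal1 k) : Phi P := by
  unfold arcIdeal1 at hP
  induction hP using Submodule.span_induction with
  | mem x hx =>
    obtain ⟨l, rfl⟩ := hx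
    exact phi_gen l
  | zero => exact phi_zero
  | add x y hx hy ihx ihy => exact phi_add ihx ihy
  | smul a x hx ih => exact phi_mul a ih
end

section
variable {k : Type*} [Field k] [CharZero k]

lemma single12_ne_pair : (Finsupp.single 1 2 : ℕ →₀ ℕ) ≠ Finsupp.single 0 1 + Finsupp.single 2 1 := by
  intro h
  have h0 := DFunLike.congr_fun h 0
  simp [Finsupp.single_apply] at h0

lemma indep {a b c d : k}
    (h : (C a + C b * X 0 + C c * X 1 + C d * X 1 ^ 2 : MvPolynomial ℕ k) ∈ arcIdeal1 k) :
    a = 0 ∧ b = 0 ∧ c = 0 ∧ d = 0 := by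
  obtain ⟨h0, h1, h2⟩ := phi_mem h
  have hb := h1 0
  have hc := h1 1
  simp only [coeff_add, coeff_C, coeff_C_mul, coeff_X', X_pow_eq_monomial,
    coeff_monomial] at h0 hb hc h2
  simp [Finsupp.single_eq_single_iff, Finsupp.single_eq_zero, (eq_comm (a := (0 : ℕ →₀ ℕ))),
    (pair_ne_zero 0 2).symm, (pair_ne_single 0 2 0).symm, (pair_ne_single 0 2 1).symm,
    single12_ne_pair] at h0 hb hc h2
  exact ⟨h0, hb, hc, h2⟩
end

section
variable {k : Type*} [Field k] [CharZero k]

lemma g_mem (l : ℕ) :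
    (∑ s ∈ Finset.range (l + 1), X s * X (l - s) : MvPolynomial ℕ k) ∈ arcIdeal1 k :=
  Ideal.subset_span ⟨l, rfl⟩

lemma mem1 : (X 0 ^ 2 : MvPolynomial ℕ k) ∈ arcIdeal1 k := by
  have := g_mem (k := k) 0
  simpa [Finset.sum_range_one, pow_two] using this

lemma mem2 : (X 0 * X 1 : MvPolynomial ℕ k) ∈ arcIdeal1 k := by
  have h := Ideal.mul_mem_left _ (C (2⁻¹ : k)) (g_mem (k := k) 1)
  have e : (C (2⁻¹ : k)) * (∑ s ∈ Finset.range (1 + 1), X s * X (1 - s) : MvPolynomial ℕ k)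
      = X 0 * X 1 := by
    rw [Finset.sum_range_succ, Finset.sum_range_one]
    norm_num
    rw [show (X 0 * X 1 + X 1 * X 0 : MvPolynomial ℕ k) = C (2 : k) * (X 0 * X 1) by
      rw [map_ofNat]; ring]
    rw [← mul_assoc, ← C_mul]
    norm_num
  rwa [e] at h

lemma mem3 : (X 1 ^ 3 : MvPolynomial ℕ k) ∈ arcIdeal1 k := by
  have h := sub_mem (Ideal.mul_mem_left _ (X 1) (g_mem (k := k) 2))
    (Ideal.mul_mem_left _ (X 2) (g_mem (k := k) 1))
  have e : (X 1 : MvPolynomial ℕ k) * (∑ s ∈ Finset.range (2 + 1), X s * X (2 - s))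
      - X 2 * (∑ s ∈ Finset.range (1 + 1), X s * X (1 - s)) = X 1 ^ 3 := by
    rw [Finset.sum_range_succ, Finset.sum_range_succ, Finset.sum_range_one,
      Finset.sum_range_succ, Finset.sum_range_one]
    norm_num
    ring
  rwa [e] at h
end

section
variable {k : Type*} [Field k] [CharZero k]

lemma sq_mem : (X 0 ^ 2 : MvPolynomial (Fin 2) k) ∈
    Ideal.span {(X 0 ^ 2 : MvPolynomial (Fin 2) k), X 0 * X 1, X 1 ^ 3} :=
  Ideal.subset_span (by simp)

lemma mixed_mem : (X 0 * X 1 : MvPolynomial (Fin 2) k) ∈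
    Ideal.span {(X 0 ^ 2 : MvPolynomial (Fin 2) k), X 0 * X 1, X 1 ^ 3} :=
  Ideal.subset_span (by simp)

lemma cube_mem : (X 1 ^ 3 : MvPolynomial (Fin 2) k) ∈
    Ideal.span {(X 0 ^ 2 : MvPolynomial (Fin 2) k), X 0 * X 1, X 1 ^ 3} :=
  Ideal.subset_span (by simp)

lemma reduce (P : MvPolynomial (Fin 2) k) :
    ∃ a b c d : k, P - (C a + C b * X 0 + C c * X 1 + C d * X 1 ^ 2) ∈
      Ideal.span {(X 0 ^ 2 : MvPolynomial (Fin 2) k), X 0 * X 1, X 1 ^ 3} := by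
  induction P using MvPolynomial.induction_on with
  | C a =>
    refine ⟨a, 0, 0, 0, ?_⟩
    rw [show (C a - (C a + C (0:k) * X 0 + C 0 * X 1 + C 0 * X 1 ^ 2) :
      MvPolynomial (Fin 2) k) = 0 by simp]
    exact zero_mem _
  | add p q hp hq =>
    obtain ⟨a, b, c, d, hp⟩ := hp
    obtain ⟨a', b', c', d', hq⟩ := hq
    refine ⟨a + a', b + b', c + c', d + d', ?_⟩
    rw [show p + q - (C (a + a') + C (b + b') * X 0 + C (c + c') * X 1 + C (d + d') * X 1 ^ 2)
      = (p - (C a + C b * X 0 + C c * X 1 + C d * X 1 ^ 2))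
        + (q - (C a' + C b' * X 0 + C c' * X 1 + C d' * X 1 ^ 2)) by
      rw [map_add C, map_add C, map_add C, map_add C]; ring]
    exact add_mem hp hq
  | mul_X p i hp =>
    obtain ⟨a, b, c, d, hp⟩ := hp
    have hi : i = 0 ∨ i = 1 := by fin_cases i <;> simp
    rcases hi with rfl | rfl
    · refine ⟨0, a, 0, 0, ?_⟩
      rw [show p * X 0 - (C (0:k) + C a * X 0 + C 0 * X 1 + C 0 * X 1 ^ 2)
        = (p - (C a + C b * X 0 + C c * X 1 + C d * X 1 ^ 2)) * X 0
          + C b * X 0 ^ 2 + C c * (X 0 * X 1) + C d * (X 1 * (X 0 * X 1)) by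
        rw [map_zero C]; ring]
      exact add_mem (add_mem (add_mem (Ideal.mul_mem_right _ _ hp)
        (Ideal.mul_mem_left _ _ sq_mem)) (Ideal.mul_mem_left _ _ mixed_mem))
        (Ideal.mul_mem_left _ _ (Ideal.mul_mem_left _ _ mixed_mem))
    · refine ⟨0, 0, a, c, ?_⟩
      rw [show p * X 1 - (C (0:k) + C 0 * X 0 + C a * X 1 + C c * X 1 ^ 2)
        = (p - (C a + C b * X 0 + C c * X 1 + C d * X 1 ^ 2)) * X 1
          + C b * (X 0 * X 1) + C d * X 1 ^ 3 by
        rw [map_zero C]; ring]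
      exact add_mem (add_mem (Ideal.mul_mem_right _ _ hp)
        (Ideal.mul_mem_left _ _ mixed_mem)) (Ideal.mul_mem_left _ _ cube_mem)
end


/-- for `n = 1`, `h = 1`, the quotient `k[x, x'] / (I_1^arc ∩ k[x, x'])` has
dimension `4`, and the elimination ideal equals `(x², x x', (x')³)`. Here `X 0 = x` and
`X 1 = x'`, with `k[x, x']` embedded in `k[x, x', x'', …]` via `Fin.val`. -/
theorem stmt18 {k : Type*} [Field k] [CharZero k] :
    Module.finrank k
      (MvPolynomial (Fin 2) k ⧸
        Ideal.comap (rename (Fin.val : Fin 2 → ℕ) :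
          MvPolynomial (Fin 2) k →ₐ[k] MvPolynomial ℕ k).toRingHom (arcIdeal1 k)) = 4 ∧
    Ideal.comap (rename (Fin.val : Fin 2 → ℕ) :
        MvPolynomial (Fin 2) k →ₐ[k] MvPolynomial ℕ k).toRingHom (arcIdeal1 k)
      = Ideal.span {(X 0 ^ 2 : MvPolynomial (Fin 2) k), X 0 * X 1, X 1 ^ 3} := by
  have hJC : Ideal.span {(X 0 ^ 2 : MvPolynomial (Fin 2) k), X 0 * X 1, X 1 ^ 3}
      ≤ Ideal.comap (rename (Fin.val : Fin 2 → ℕ) :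
        MvPolynomial (Fin 2) k →ₐ[k] MvPolynomial ℕ k).toRingHom (arcIdeal1 k) := by
    rw [Ideal.span_le]
    rintro x hx
    simp only [Set.mem_insert_iff, Set.mem_singleton_iff] at hx
    rcases hx with rfl | rfl | rfl <;>
      · rw [SetLike.mem_coe, Ideal.mem_comap]
        simp only [AlgHom.toRingHom_eq_coe, RingHom.coe_coe, map_pow, map_mul, rename_X,
          Fin.val_zero, Fin.val_one]
        first
          | exact mem1
          | exact mem2
          | exact mem3
  have hindep : ∀ a b c d : k,
      (C a + C b * X 0 + C c * X 1 + C d * X 1 ^ 2 : MvPolynomial (Fin 2) k) ∈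
        Ideal.comap (rename (Fin.val : Fin 2 → ℕ) :
          MvPolynomial (Fin 2) k →ₐ[k] MvPolynomial ℕ k).toRingHom (arcIdeal1 k) →
      a = 0 ∧ b = 0 ∧ c = 0 ∧ d = 0 := by
    intro a b c d h
    rw [Ideal.mem_comap] at h
    apply indep (k := k)
    have e : ((rename (Fin.val : Fin 2 → ℕ) :
        MvPolynomial (Fin 2) k →ₐ[k] MvPolynomial ℕ k).toRingHom)
        (C a + C b * X 0 + C c * X 1 + C d * X 1 ^ 2)
        = (C a + C b * X 0 + C c * X 1 + C d * X 1 ^ 2 : MvPolynomial ℕ k) := by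
      simp only [AlgHom.toRingHom_eq_coe, RingHom.coe_coe, map_add, map_mul, map_pow,
        rename_X, rename_C, Fin.val_zero, Fin.val_one]
    rwa [e] at h
  have hCJ : Ideal.comap (rename (Fin.val : Fin 2 → ℕ) :
        MvPolynomial (Fin 2) k →ₐ[k] MvPolynomial ℕ k).toRingHom (arcIdeal1 k)
      = Ideal.span {(X 0 ^ 2 : MvPolynomial (Fin 2) k), X 0 * X 1, X 1 ^ 3} := by
    refine le_antisymm ?_ hJC
    intro P hP
    obtain ⟨a, b, c, d, hm⟩ := reduce P
    have hcombo : (C a + C b * X 0 + C c * X 1 + C d * X 1 ^ 2 : MvPolynomial (Fin 2) k) ∈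
        Ideal.comap (rename (Fin.val : Fin 2 → ℕ) :
          MvPolynomial (Fin 2) k →ₐ[k] MvPolynomial ℕ k).toRingHom (arcIdeal1 k) := by
      have h2 := hJC hm
      have := Ideal.sub_mem _ hP h2
      simpa using this
    obtain ⟨rfl, rfl, rfl, rfl⟩ := hindep _ _ _ _ hcombo
    simpa using hm
  refine ⟨?_, hCJ⟩
  classical
  set I2 := Ideal.comap (rename (Fin.val : Fin 2 → ℕ) :
      MvPolynomial (Fin 2) k →ₐ[k] MvPolynomial ℕ k).toRingHom (arcIdeal1 k) with hI2def
  let q := Ideal.Quotient.mkₐ k I2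
  let v : Fin 4 → MvPolynomial (Fin 2) k := ![1, X 0, X 1, X 1 ^ 2]
  have hsum : ∀ g : Fin 4 → k, ∑ i, g i • v i
      = C (g 0) + C (g 1) * X 0 + C (g 2) * X 1 + C (g 3) * X 1 ^ 2 := by
    intro g
    rw [Fin.sum_univ_four]
    simp only [v, Matrix.cons_val_zero, Matrix.cons_val_one, Matrix.head_cons,
      Matrix.cons_val_two, Matrix.tail_cons, Matrix.cons_val_three, Matrix.head_fin_const]
    simp [smul_eq_C_mul]
  have hli : LinearIndependent k (fun i => q (v i)) := by
    rw [Fintype.linearIndependent_iff]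
    intro g hg
    have hq0 : q (∑ i, g i • v i) = 0 := by
      rw [map_sum]
      simpa [map_smul] using hg
    rw [hsum] at hq0
    have hmem : (C (g 0) + C (g 1) * X 0 + C (g 2) * X 1 + C (g 3) * X 1 ^ 2 :
        MvPolynomial (Fin 2) k) ∈ I2 := by
      rwa [Ideal.Quotient.mkₐ_eq_mk, Ideal.Quotient.eq_zero_iff_mem] at hq0
    obtain ⟨h0, h1, h2, h3⟩ := hindep _ _ _ _ hmem
    intro i
    fin_cases i <;> assumption
  have hsp : ⊤ ≤ Submodule.span k (Set.range fun i => q (v i)) := by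
    intro x _
    obtain ⟨P, rfl⟩ := Ideal.Quotient.mkₐ_surjective k I2 x
    obtain ⟨a, b, c, d, hm⟩ := reduce P
    have hg : q P = ∑ i, (![a, b, c, d] : Fin 4 → k) i • q (v i) := by
      have h1 : q (P - (C a + C b * X 0 + C c * X 1 + C d * X 1 ^ 2)) = 0 := by
        rw [Ideal.Quotient.mkₐ_eq_mk, Ideal.Quotient.eq_zero_iff_mem]
        exact hJC hm
      rw [map_sub] at h1
      have h2 : q P = q (C a + C b * X 0 + C c * X 1 + C d * X 1 ^ 2) := sub_eq_zero.mp h1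
      calc q P = q (C a + C b * X 0 + C c * X 1 + C d * X 1 ^ 2) := h2
        _ = q (∑ i, (![a, b, c, d] : Fin 4 → k) i • v i) := by rw [hsum]; simp
        _ = ∑ i, (![a, b, c, d] : Fin 4 → k) i • q (v i) := by
            rw [map_sum]; simp [map_smul]
    rw [hg]
    exact Submodule.sum_mem _ fun i _ =>
      Submodule.smul_mem _ _ (Submodule.subset_span (Set.mem_range_self i))
  have B := Module.Basis.mk hli hsp
  rw [Module.finrank_eq_card_basis B]
  simp
end
end
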